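/- arXiv:1009.0085 — 4 statements merged into one kernel-verified Lean document; each statement's English description precedes it below -/
import Mathlib

section
/- Let m ≠ 0. In the Verma module over sch(1) with conformal weight d and mass m, a singular vector exists if and only if d = p − 3/2 for some p ∈ ℕ = {1,2,...}; in that case the singular vector is unique up to scalar multiple and equals (G² − 2mK)^p w₀. For m = 0, for every value of d the vectors G^p w₀ (p ∈ ℕ) are singular vectors, and every singular vector is a scalar multiple of some G^p w₀. -/
/-- The centrally extended Schrödinger algebra sch(1) in (1+1)-dimensional spacetime,
represented on a complex vector space `V`, together with the lowest weight (Verma)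
structure of conformal weight `d` and mass `m`.  The nonvanishing commutation relations
are `[H,D]=2H, [H,K]=D, [D,K]=2K, [P,G]=M, [H,G]=P, [D,G]=G, [P,D]=P, [P,K]=G`,
`M` is central, and the Verma module has basis `{G^k K^ℓ w₀}`. -/
structure Sch1Verma (d m : ℂ) (V : Type*) [AddCommGroup V] [Module ℂ V] where
  H : Module.End ℂ V
  P : Module.End ℂ V
  G : Module.End ℂ V
  D : Module.End ℂ V
  K : Module.End ℂ V
  M : Module.End ℂ V
  rel_HD : H * D - D * H = (2 : ℂ) • H
  rel_HK : H * K - K * H = D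
  rel_DK : D * K - K * D = (2 : ℂ) • K
  rel_PG : P * G - G * P = M
  rel_HG : H * G - G * H = P
  rel_DG : D * G - G * D = G
  rel_PD : P * D - D * P = P
  rel_PK : P * K - K * P = G
  rel_HP : H * P = P * H
  rel_HM : H * M = M * H
  rel_PM : P * M = M * P
  rel_GK : G * K = K * G
  rel_GM : G * M = M * G
  rel_DM : D * M = M * D
  rel_KM : K * M = M * K
  /-- the lowest weight vector -/
  w0 : V
  lw_H : H w0 = 0
  lw_P : P w0 = 0
  lw_D : D w0 = (-d) • w0
  lw_M : M w0 = m • w0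
  /-- the vectors `G^k K^ℓ w₀` form a basis of the Verma module -/
  pbw_indep : LinearIndependent ℂ (fun i : ℕ × ℕ => (G ^ i.1 * K ^ i.2) w0)
  pbw_span : Submodule.span ℂ (Set.range (fun i : ℕ × ℕ => (G ^ i.1 * K ^ i.2) w0)) = ⊤

namespace Sch1Verma

variable {d m : ℂ} {V : Type*} [AddCommGroup V] [Module ℂ V]

/-- A singular vector: a `D`-eigenvector which is not a scalar multiple of the lowest
weight vector `w₀` and is annihilated by both `P` and `H`. -/
def IsSingular (ρ : Sch1Verma d m V) (v : V) : Prop :=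
  (∃ n : ℂ, ρ.D v = n • v) ∧ (∀ c : ℂ, v ≠ c • ρ.w0) ∧ ρ.P v = 0 ∧ ρ.H v = 0

end Sch1Verma

/-!
On the basis `G^k K^ℓ w₀`, `P` acts as `m ∂_G + G ∂_K`, so `P v = 0` expresses the coefficient
`c(x, y+1)` of `G^x K^(y+1) w₀` in `v` through `c(x+2, y)`: an element of `ker P` is
determined by its coefficients on the vectors `G^k w₀`, and a `D`-eigenvector in `ker P` by a
single one of them.

Since `M` acts by `m`, the operator `X = G² - 2mK` commutes with `P`, and `[D, X] = 2X`,
`[H, X] = 2GP + m(1 - 2D)` give `H X^(i+1) w₀ = m (i+1)(2d - 2i + 1) X^i w₀`. So for `m ≠ 0` a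
singular vector of level `2p` is a multiple of `X^p w₀` (odd levels are ruled out by the
relation `m c(1, t) = 0`), and `H` kills `X^p w₀` exactly when `d = p - 3/2`. For `m = 0`, `P`
acts as `G ∂_K`, whose kernel is spanned by the `G^p w₀`, all of them killed by `H`.
-/

lemma Module.End.apply_apply_of_sub_eq {R M : Type*} [Semiring R] [AddCommGroup M] [Module R M]
    {A B C : Module.End R M} (h : A * B - B * A = C) (x : M) : A (B x) = B (A x) + C x := by
  simpa using LinearMap.congr_fun (sub_eq_iff_eq_add'.mp h) x

namespace Sch1Verma

variable {d m : ℂ} {V : Type*} [AddCommGroup V] [Module ℂ V] (ρ : Sch1Verma d m V)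

noncomputable def pbwBasis : Module.Basis (ℕ × ℕ) ℂ V :=
  .mk ρ.pbw_indep ρ.pbw_span.ge

lemma pbwBasis_apply (k ℓ : ℕ) : ρ.pbwBasis (k, ℓ) = (ρ.G ^ k * ρ.K ^ ℓ) ρ.w0 :=
  Module.Basis.mk_apply _ _ _

lemma pbwBasis_zero_zero : ρ.pbwBasis (0, 0) = ρ.w0 := by
  simp [pbwBasis_apply]

lemma pbwBasis_fst_zero (k : ℕ) : ρ.pbwBasis (k, 0) = (ρ.G ^ k) ρ.w0 := by
  simp [pbwBasis_apply]

lemma pbwBasis_succ_fst (k ℓ : ℕ) : ρ.pbwBasis (k + 1, ℓ) = ρ.G (ρ.pbwBasis (k, ℓ)) := by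
  rw [pbwBasis_apply, pbwBasis_apply, pow_succ', mul_assoc, Module.End.mul_apply]

lemma pbwBasis_succ_snd (k ℓ : ℕ) : ρ.pbwBasis (k, ℓ + 1) = ρ.K (ρ.pbwBasis (k, ℓ)) := by
  rw [pbwBasis_apply, pbwBasis_apply, ← Module.End.mul_apply, ← mul_assoc,
    ← (Commute.pow_left ρ.rel_GK k).eq, mul_assoc, ← pow_succ']

lemma M_apply (x : V) : ρ.M x = m • x := by
  have hM : ρ.M = m • 1 := ρ.pbwBasis.ext fun ⟨k, ℓ⟩ => by
    have hcomm : Commute ρ.M (ρ.G ^ k * ρ.K ^ ℓ) :=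
      (Commute.pow_right ρ.rel_GM.symm k).mul_right (Commute.pow_right ρ.rel_KM.symm ℓ)
    rw [pbwBasis_apply, ← Module.End.mul_apply, hcomm.eq, Module.End.mul_apply, ρ.lw_M,
      map_smul]
    rfl
  simp [hM]

lemma D_apply_G (x : V) : ρ.D (ρ.G x) = ρ.G (ρ.D x) + ρ.G x :=
  Module.End.apply_apply_of_sub_eq ρ.rel_DG x

lemma D_apply_K (x : V) : ρ.D (ρ.K x) = ρ.K (ρ.D x) + (2 : ℂ) • ρ.K x :=
  Module.End.apply_apply_of_sub_eq ρ.rel_DK x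

lemma P_apply_G (x : V) : ρ.P (ρ.G x) = ρ.G (ρ.P x) + m • x := by
  rw [Module.End.apply_apply_of_sub_eq ρ.rel_PG x, M_apply]

lemma P_apply_K (x : V) : ρ.P (ρ.K x) = ρ.K (ρ.P x) + ρ.G x :=
  Module.End.apply_apply_of_sub_eq ρ.rel_PK x

lemma H_apply_G (x : V) : ρ.H (ρ.G x) = ρ.G (ρ.H x) + ρ.P x :=
  Module.End.apply_apply_of_sub_eq ρ.rel_HG x

lemma H_apply_K (x : V) : ρ.H (ρ.K x) = ρ.K (ρ.H x) + ρ.D x :=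
  Module.End.apply_apply_of_sub_eq ρ.rel_HK x

lemma D_apply_pbwBasis (k ℓ : ℕ) :
    ρ.D (ρ.pbwBasis (k, ℓ)) = ((k : ℂ) + 2 * ℓ - d) • ρ.pbwBasis (k, ℓ) := by
  induction k with
  | zero =>
    induction ℓ with
    | zero => simp [pbwBasis_zero_zero, ρ.lw_D]
    | succ ℓ ih =>
      rw [pbwBasis_succ_snd, D_apply_K, ih, map_smul]
      module
  | succ k ih =>
    rw [pbwBasis_succ_fst, D_apply_G, ih, map_smul]
    push_cast
    module

lemma P_apply_pbwBasis (k ℓ : ℕ) :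
    ρ.P (ρ.pbwBasis (k, ℓ)) =
      ((k : ℂ) * m) • ρ.pbwBasis (k - 1, ℓ) + (ℓ : ℂ) • ρ.pbwBasis (k + 1, ℓ - 1) := by
  induction k with
  | zero =>
    induction ℓ with
    | zero => simp [pbwBasis_zero_zero, ρ.lw_P]
    | succ ℓ ih =>
      rw [pbwBasis_succ_snd, P_apply_K, ih, map_add, map_smul, map_smul, ← pbwBasis_succ_fst]
      rcases ℓ with _ | ℓ
      · simp
      · simp only [Nat.add_sub_cancel, ← pbwBasis_succ_snd]
        push_cast
        module
  | succ k ih =>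
    rw [pbwBasis_succ_fst, P_apply_G, ih, map_add, map_smul, map_smul, ← pbwBasis_succ_fst,
      ← pbwBasis_succ_fst]
    rcases k with _ | k
    · simp [add_comm]
    · simp only [Nat.add_sub_cancel]
      push_cast
      module

lemma repr_D (v : V) (j : ℕ × ℕ) :
    ρ.pbwBasis.repr (ρ.D v) j = ((j.1 : ℂ) + 2 * j.2 - d) * ρ.pbwBasis.repr v j := by
  have h : Finsupp.lapply j ∘ₗ ρ.pbwBasis.repr.toLinearMap ∘ₗ ρ.D =
      ((j.1 : ℂ) + 2 * j.2 - d) • (Finsupp.lapply j ∘ₗ ρ.pbwBasis.repr.toLinearMap) :=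
    ρ.pbwBasis.ext fun ⟨k, ℓ⟩ => by
      rcases eq_or_ne (k, ℓ) j with rfl | h
      · simp [D_apply_pbwBasis]
      · simp [D_apply_pbwBasis, h]
  exact LinearMap.congr_fun h v

lemma repr_P_zero (v : V) (y : ℕ) :
    ρ.pbwBasis.repr (ρ.P v) (0, y) = m * ρ.pbwBasis.repr v (1, y) := by
  have h : Finsupp.lapply (0, y) ∘ₗ ρ.pbwBasis.repr.toLinearMap ∘ₗ ρ.P =
      m • (Finsupp.lapply (1, y) ∘ₗ ρ.pbwBasis.repr.toLinearMap) :=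
    ρ.pbwBasis.ext fun ⟨k, ℓ⟩ => by
      rcases k with _ | _ | k <;> simp [P_apply_pbwBasis, Finsupp.single_apply]
  exact LinearMap.congr_fun h v

lemma repr_P_succ (v : V) (x y : ℕ) :
    ρ.pbwBasis.repr (ρ.P v) (x + 1, y) =
      ((x : ℂ) + 2) * m * ρ.pbwBasis.repr v (x + 2, y) +
        ((y : ℂ) + 1) * ρ.pbwBasis.repr v (x, y + 1) := by
  have h : Finsupp.lapply (x + 1, y) ∘ₗ ρ.pbwBasis.repr.toLinearMap ∘ₗ ρ.P =
      (((x : ℂ) + 2) * m) • (Finsupp.lapply (x + 2, y) ∘ₗ ρ.pbwBasis.repr.toLinearMap) +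
        ((y : ℂ) + 1) • (Finsupp.lapply (x, y + 1) ∘ₗ ρ.pbwBasis.repr.toLinearMap) :=
    ρ.pbwBasis.ext fun ⟨k, ℓ⟩ => by
      rcases ℓ with _ | ℓ <;> simp [P_apply_pbwBasis, Finsupp.single_apply] <;>
        split_ifs <;> simp_all
  exact LinearMap.congr_fun h v

lemma repr_G_succ (v : V) (k ℓ : ℕ) :
    ρ.pbwBasis.repr (ρ.G v) (k + 1, ℓ) = ρ.pbwBasis.repr v (k, ℓ) := by
  have h : Finsupp.lapply (k + 1, ℓ) ∘ₗ ρ.pbwBasis.repr.toLinearMap ∘ₗ ρ.G =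
      Finsupp.lapply (k, ℓ) ∘ₗ ρ.pbwBasis.repr.toLinearMap :=
    ρ.pbwBasis.ext fun ⟨k, ℓ⟩ => by
      simp [← pbwBasis_succ_fst, Finsupp.single_apply]
  exact LinearMap.congr_fun h v

lemma repr_K_zero (v : V) (k : ℕ) : ρ.pbwBasis.repr (ρ.K v) (k, 0) = 0 := by
  have h : Finsupp.lapply (k, 0) ∘ₗ ρ.pbwBasis.repr.toLinearMap ∘ₗ ρ.K = 0 :=
    ρ.pbwBasis.ext fun ⟨k, ℓ⟩ => by
      simp [← pbwBasis_succ_snd]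
  exact LinearMap.congr_fun h v

def X : Module.End ℂ V := ρ.G * ρ.G - (2 * m) • ρ.K

lemma X_apply (x : V) : ρ.X x = ρ.G (ρ.G x) - (2 * m) • ρ.K x := rfl

lemma P_apply_X (x : V) : ρ.P (ρ.X x) = ρ.X (ρ.P x) := by
  simp only [X_apply, map_sub, map_smul, P_apply_G, P_apply_K, map_add]
  module

lemma D_apply_X (x : V) : ρ.D (ρ.X x) = ρ.X (ρ.D x) + (2 : ℂ) • ρ.X x := by
  simp only [X_apply, map_sub, map_smul, D_apply_G, D_apply_K, map_add]
  module

lemma H_apply_X (x : V) :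
    ρ.H (ρ.X x) = ρ.X (ρ.H x) + (2 : ℂ) • ρ.G (ρ.P x) + m • x - (2 * m) • ρ.D x := by
  simp only [X_apply, map_sub, map_smul, H_apply_G, H_apply_K, P_apply_G, map_add]
  module

lemma P_X_pow_w0 (i : ℕ) : ρ.P ((ρ.X ^ i) ρ.w0) = 0 := by
  induction i with
  | zero => exact ρ.lw_P
  | succ i ih => rw [pow_succ', Module.End.mul_apply, P_apply_X, ih, map_zero]

lemma D_X_pow_w0 (i : ℕ) : ρ.D ((ρ.X ^ i) ρ.w0) = (2 * (i : ℂ) - d) • (ρ.X ^ i) ρ.w0 := by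
  induction i with
  | zero => simpa using ρ.lw_D
  | succ i ih =>
    rw [pow_succ', Module.End.mul_apply, D_apply_X, ih, map_smul]
    push_cast
    module

lemma H_X_pow_succ_w0 (i : ℕ) :
    ρ.H ((ρ.X ^ (i + 1)) ρ.w0) = (m * (i + 1) * (2 * d - 2 * i + 1)) • (ρ.X ^ i) ρ.w0 := by
  induction i with
  | zero =>
    simp only [zero_add, pow_one, pow_zero, Module.End.one_apply, H_apply_X, ρ.lw_H, ρ.lw_P,
      ρ.lw_D, map_zero, smul_zero, Nat.cast_zero]
    module
  | succ i ih =>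
    rw [pow_succ' _ (i + 1), Module.End.mul_apply, H_apply_X, ih, P_X_pow_w0, map_zero, D_X_pow_w0,
      map_smul, pow_succ' _ i, Module.End.mul_apply]
    push_cast
    module

lemma repr_X_pow_w0 (i : ℕ) : ρ.pbwBasis.repr ((ρ.X ^ i) ρ.w0) (2 * i, 0) = 1 := by
  induction i with
  | zero => simp [← pbwBasis_zero_zero]
  | succ i ih =>
    rw [pow_succ', Module.End.mul_apply, X_apply, map_sub, map_smul, Finsupp.sub_apply,
      Finsupp.smul_apply, repr_K_zero, show 2 * (i + 1) = 2 * i + 1 + 1 by ring, repr_G_succ,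
      repr_G_succ, ih]
    simp

lemma eq_zero_of_P_eq_zero {v : V} (hP : ρ.P v = 0)
    (hrow : ∀ x, ρ.pbwBasis.repr v (x, 0) = 0) : v = 0 := by
  have hcoef : ∀ y x, ρ.pbwBasis.repr v (x, y) = 0 := by
    intro y
    induction y with
    | zero => exact hrow
    | succ y ih =>
      intro x
      have h := ρ.repr_P_succ v x y
      rw [hP, ih (x + 2)] at h
      simpa [Nat.cast_add_one_ne_zero] using h.symm
  exact ρ.pbwBasis.repr.map_eq_zero_iff.mp (Finsupp.ext fun j => hcoef j.2 j.1)

lemma eq_smul_of_P_eq_zero {u v : V} {a : ℂ} (hu : ρ.P u = 0) (hv : ρ.P v = 0)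
    (hrow : ∀ x, ρ.pbwBasis.repr v (x, 0) = a * ρ.pbwBasis.repr u (x, 0)) : v = a • u :=
  sub_eq_zero.mp <| ρ.eq_zero_of_P_eq_zero (by simp [hu, hv]) fun x => by simp [hrow]

lemma repr_add_two_mul_zero_eq_zero (hm : m ≠ 0) {v : V} (hP : ρ.P v = 0) {x y : ℕ}
    (h : ρ.pbwBasis.repr v (x, y) = 0) : ρ.pbwBasis.repr v (x + 2 * y, 0) = 0 := by
  induction y generalizing x with
  | zero => simpa using h
  | succ y ih =>
    have hrel := ρ.repr_P_succ v x y
    rw [hP, h] at hrel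
    have hx : ((x : ℂ) + 2) ≠ 0 := by exact_mod_cast Nat.succ_ne_zero (x + 1)
    rw [show x + 2 * (y + 1) = x + 2 + 2 * y by ring]
    exact ih (by simpa [hx, hm] using hrel.symm)

lemma even_of_P_eq_zero (hm : m ≠ 0) {v : V} (hP : ρ.P v = 0) {N : ℕ}
    (hN : ρ.pbwBasis.repr v (N, 0) ≠ 0) : Even N := by
  by_contra hodd
  obtain ⟨t, rfl⟩ := Nat.not_even_iff_odd.mp hodd
  have h1 : ρ.pbwBasis.repr v (1, t) = 0 := by
    simpa [hP, hm] using (ρ.repr_P_zero v t).symm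
  exact hN (by simpa [add_comm] using ρ.repr_add_two_mul_zero_eq_zero hm hP h1)

lemma fst_add_two_mul_snd_eq {v : V} {n : ℂ} (hD : ρ.D v = n • v) {i j : ℕ × ℕ}
    (hi : ρ.pbwBasis.repr v i ≠ 0) (hj : ρ.pbwBasis.repr v j ≠ 0) :
    i.1 + 2 * i.2 = j.1 + 2 * j.2 := by
  have hweight : ∀ j, ρ.pbwBasis.repr v j ≠ 0 → (j.1 : ℂ) + 2 * j.2 - d = n := fun j hj =>
    mul_right_cancel₀ hj (by rw [← repr_D, hD]; simp)
  have h : ((i.1 + 2 * i.2 : ℕ) : ℂ) = (j.1 + 2 * j.2 : ℕ) := by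
    push_cast
    linear_combination hweight i hi - hweight j hj
  exact_mod_cast h

lemma exists_repr_fst_zero_support {v : V} {n : ℂ} (hD : ρ.D v = n • v) (hP : ρ.P v = 0)
    (hv : v ≠ 0) :
    ∃ N, ρ.pbwBasis.repr v (N, 0) ≠ 0 ∧ ∀ x, x ≠ N → ρ.pbwBasis.repr v (x, 0) = 0 := by
  obtain ⟨N, hN⟩ : ∃ N, ρ.pbwBasis.repr v (N, 0) ≠ 0 := by
    by_contra! h
    exact hv (ρ.eq_zero_of_P_eq_zero hP h)
  exact ⟨N, hN, fun x hx => by_contra fun h => hx (by simpa using ρ.fst_add_two_mul_snd_eq hD h hN)⟩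

lemma repr_X_pow_w0_fst_zero (i x : ℕ) :
    ρ.pbwBasis.repr ((ρ.X ^ i) ρ.w0) (x, 0) = if x = 2 * i then 1 else 0 := by
  split_ifs with hx
  · rw [hx, repr_X_pow_w0]
  · by_contra h
    have htop : ρ.pbwBasis.repr ((ρ.X ^ i) ρ.w0) (2 * i, 0) ≠ 0 := by simp [repr_X_pow_w0]
    exact hx (by simpa using ρ.fst_add_two_mul_snd_eq (ρ.D_X_pow_w0 i) h htop)

lemma P_G_pow_w0 (hm : m = 0) (p : ℕ) : ρ.P ((ρ.G ^ p) ρ.w0) = 0 := by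
  simp [← pbwBasis_fst_zero, P_apply_pbwBasis, hm]

lemma H_G_pow_w0 (hm : m = 0) (p : ℕ) : ρ.H ((ρ.G ^ p) ρ.w0) = 0 := by
  induction p with
  | zero => exact ρ.lw_H
  | succ p ih => rw [pow_succ', Module.End.mul_apply, H_apply_G, ih, P_G_pow_w0 ρ hm, map_zero,
      add_zero]

lemma ne_smul_w0_of_repr_ne_zero {v : V} {j : ℕ × ℕ} (hj : j ≠ (0, 0))
    (hv : ρ.pbwBasis.repr v j ≠ 0) (a : ℂ) : v ≠ a • ρ.w0 := by
  rintro rfl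
  simp [← pbwBasis_zero_zero, hj.symm] at hv

lemma isSingular_X_pow_w0 {p : ℕ} (hp : 1 ≤ p) (hd : d = p - 3 / 2) :
    ρ.IsSingular ((ρ.X ^ p) ρ.w0) := by
  obtain ⟨q, rfl⟩ := Nat.exists_eq_add_of_le' hp
  have hweight : 2 * d - 2 * q + 1 = 0 := by
    rw [hd]
    push_cast
    ring
  refine ⟨⟨_, ρ.D_X_pow_w0 _⟩, ρ.ne_smul_w0_of_repr_ne_zero (j := (2 * (q + 1), 0)) (by simp)
    (by simp [repr_X_pow_w0]), ρ.P_X_pow_w0 _, ?_⟩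
  rw [H_X_pow_succ_w0, hweight, mul_zero, zero_smul]

lemma isSingular_G_pow_w0 (hm : m = 0) {p : ℕ} (hp : 1 ≤ p) :
    ρ.IsSingular ((ρ.G ^ p) ρ.w0) := by
  refine ⟨⟨_, by rw [← pbwBasis_fst_zero]; exact ρ.D_apply_pbwBasis p 0⟩,
    ρ.ne_smul_w0_of_repr_ne_zero (j := (p, 0)) (by simp; omega) (by simp [← pbwBasis_fst_zero]),
    ρ.P_G_pow_w0 hm p, ρ.H_G_pow_w0 hm p⟩

variable {ρ}

lemma IsSingular.ne_zero {v : V} (hv : ρ.IsSingular v) : v ≠ 0 :=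
  fun h => hv.2.1 0 (by simp [h])

lemma IsSingular.exists_eq_smul_X_pow_w0 (hm : m ≠ 0) {v : V} (hv : ρ.IsSingular v) :
    ∃ p : ℕ, 1 ≤ p ∧ d = p - 3 / 2 ∧ ∃ c : ℂ, v = c • (ρ.X ^ p) ρ.w0 := by
  have hv0 := hv.ne_zero
  obtain ⟨⟨n, hD⟩, hw0, hP, hH⟩ := hv
  obtain ⟨N, hN, hrow⟩ := ρ.exists_repr_fst_zero_support hD hP hv0
  obtain ⟨p, rfl⟩ : ∃ p, N = 2 * p := (ρ.even_of_P_eq_zero hm hP hN).two_dvd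
  set c := ρ.pbwBasis.repr v (2 * p, 0)
  have hvc : v = c • (ρ.X ^ p) ρ.w0 := ρ.eq_smul_of_P_eq_zero (ρ.P_X_pow_w0 p) hP fun x => by
    rw [repr_X_pow_w0_fst_zero]
    split_ifs with hx
    · rw [hx, mul_one]
    · rw [hrow x hx, mul_zero]
  obtain ⟨q, rfl⟩ : ∃ q, p = q + 1 := Nat.exists_eq_succ_of_ne_zero fun hp =>
    hw0 c (by simpa [hp] using hvc)
  have hXq : (ρ.X ^ q) ρ.w0 ≠ 0 := fun h => by simpa [h] using ρ.repr_X_pow_w0 q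
  rw [hvc, map_smul, H_X_pow_succ_w0, smul_smul, smul_eq_zero] at hH
  have hweight : 2 * d - 2 * q + 1 = 0 := by
    simpa [hN, hm, Nat.cast_add_one_ne_zero, hXq] using hH
  exact ⟨q + 1, by omega, by push_cast; linear_combination hweight / 2, c, hvc⟩

lemma IsSingular.exists_eq_smul_G_pow_w0 (hm : m = 0) {v : V} (hv : ρ.IsSingular v) :
    ∃ p : ℕ, 1 ≤ p ∧ ∃ c : ℂ, v = c • (ρ.G ^ p) ρ.w0 := by
  have hv0 := hv.ne_zero
  obtain ⟨⟨n, hD⟩, hw0, hP, -⟩ := hv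
  obtain ⟨N, -, hrow⟩ := ρ.exists_repr_fst_zero_support hD hP hv0
  set c := ρ.pbwBasis.repr v (N, 0)
  have hvc : v = c • (ρ.G ^ N) ρ.w0 := ρ.eq_smul_of_P_eq_zero (ρ.P_G_pow_w0 hm N) hP fun x => by
    rw [← pbwBasis_fst_zero, Module.Basis.repr_self, Finsupp.single_apply]
    split_ifs with hx
    · rw [← (Prod.mk.inj hx).1, mul_one]
    · rw [hrow x fun h => hx (by rw [h]), mul_zero]
  exact ⟨N, Nat.one_le_iff_ne_zero.mpr fun hN => hw0 c (by simpa [hN] using hvc), c, hvc⟩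

end Sch1Verma

/-- For `m ≠ 0` the Verma module over sch(1) of weight `d` and mass `m`
has a singular vector iff `d = p - 3/2` for some `p ∈ ℕ = {1,2,...}`; in that case the
singular vector is unique up to scalar multiple and equals `(G² - 2mK)^p w₀`.
For `m = 0` every `G^p w₀` (`p ≥ 1`) is a singular vector, and every singular vector is a
scalar multiple of some `G^p w₀`. -/
theorem statement0 {d m : ℂ} {V : Type*} [AddCommGroup V] [Module ℂ V]
    (ρ : Sch1Verma d m V) :
    (m ≠ 0 →
      (((∃ v, ρ.IsSingular v) ↔ ∃ p : ℕ, 1 ≤ p ∧ d = (p : ℂ) - 3/2) ∧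
        (∀ p : ℕ, 1 ≤ p → d = (p : ℂ) - 3/2 →
          ρ.IsSingular (((ρ.G * ρ.G - (2 * m) • ρ.K) ^ p) ρ.w0) ∧
          ∀ v, ρ.IsSingular v →
            ∃ c : ℂ, v = c • ((ρ.G * ρ.G - (2 * m) • ρ.K) ^ p) ρ.w0))) ∧
    (m = 0 →
      ((∀ p : ℕ, 1 ≤ p → ρ.IsSingular ((ρ.G ^ p) ρ.w0)) ∧
        (∀ v, ρ.IsSingular v → ∃ p : ℕ, 1 ≤ p ∧ ∃ c : ℂ, v = c • (ρ.G ^ p) ρ.w0))) := by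
  refine ⟨fun hm => ⟨⟨?_, ?_⟩, fun p hp hd => ⟨ρ.isSingular_X_pow_w0 hp hd, fun v hv => ?_⟩⟩,
    fun hm => ⟨fun p hp => ρ.isSingular_G_pow_w0 hm hp,
      fun v hv => hv.exists_eq_smul_G_pow_w0 hm⟩⟩
  · rintro ⟨v, hv⟩
    obtain ⟨p, hp, hd, -⟩ := hv.exists_eq_smul_X_pow_w0 hm
    exact ⟨p, hp, hd⟩
  · rintro ⟨p, hp, hd⟩
    exact ⟨_, ρ.isSingular_X_pow_w0 hp hd⟩
  · obtain ⟨q, -, hdq, c, rfl⟩ := hv.exists_eq_smul_X_pow_w0 hm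
    obtain rfl : q = p := by exact_mod_cast (by linear_combination hd - hdq : (q : ℂ) = p)
    exact ⟨c, rfl⟩
end

section
/- Let v_s = f(G,K) u₀ ∈ V^d, where u₀ = (αG + βS)v₀ with α an even and β an odd scalar, and f(G,K) = Σ_ℓ a_ℓ G^{n−2ℓ} K^ℓ is a homogeneous polynomial of degree n in G, K (with deg G = 1, deg K = 2). If P v_s = 0 then P u₀ = 0; consequently u₀ satisfies H u₀ = 0, P u₀ = 0 and D u₀ = −(d−1) u₀, i.e., u₀ is a lowest weight vector for the subalgebra sch(1) with conformal weight d−1. -/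
/-- The `N = 1` super Schrödinger algebra 𝔰(1/1) represented on a complex vector space
`V`, together with the lowest weight (Verma) structure of conformal weight `d` and mass
`m`.  The even generators are `H, P, G, D, K, M` (satisfying the sch(1) relations, `M`
central), the odd generators are `Q, S, X`, and `Chi` is the action of the odd scalar χ
(`χ² = m/2`, `X v₀ = χ v₀`).  Relations between generators not listed below vanish.
The Verma module `V^d` has (super) basis `{G^k K^ℓ v₀, G^k K^ℓ S v₀}` over the
coefficient superalgebra `ℂ[χ]`, i.e. the ℂ-basis `{G^k K^ℓ S^a χ^c v₀}`. -/
structure SSch1Verma (d m : ℂ) (V : Type*) [AddCommGroup V] [Module ℂ V] where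
  H : Module.End ℂ V
  P : Module.End ℂ V
  G : Module.End ℂ V
  D : Module.End ℂ V
  K : Module.End ℂ V
  M : Module.End ℂ V
  Q : Module.End ℂ V
  S : Module.End ℂ V
  X : Module.End ℂ V
  Chi : Module.End ℂ V
  -- nonvanishing even-even commutators
  rel_HD : H * D - D * H = (2 : ℂ) • H
  rel_HK : H * K - K * H = D
  rel_DK : D * K - K * D = (2 : ℂ) • K
  rel_PG : P * G - G * P = M
  rel_HG : H * G - G * H = P
  rel_DG : D * G - G * D = G
  rel_PD : P * D - D * P = P
  rel_PK : P * K - K * P = G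
  -- vanishing even-even commutators
  rel_HP : H * P = P * H
  rel_HM : H * M = M * H
  rel_PM : P * M = M * P
  rel_GK : G * K = K * G
  rel_GM : G * M = M * G
  rel_DM : D * M = M * D
  rel_KM : K * M = M * K
  -- nonvanishing even-odd commutators
  rel_QD : Q * D - D * Q = Q
  rel_QK : Q * K - K * Q = S
  rel_DS : D * S - S * D = S
  rel_HS : H * S - S * H = Q
  rel_QG : Q * G - G * Q = X
  rel_PS : P * S - S * P = X
  -- vanishing even-odd commutators
  rel_QH : Q * H = H * Q
  rel_QP : Q * P = P * Q
  rel_QM : Q * M = M * Q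
  rel_SG : S * G = G * S
  rel_SK : S * K = K * S
  rel_SM : S * M = M * S
  rel_XH : X * H = H * X
  rel_XP : X * P = P * X
  rel_XG : X * G = G * X
  rel_XD : X * D = D * X
  rel_XK : X * K = K * X
  rel_XM : X * M = M * X
  -- odd-odd anticommutators
  rel_QQ : Q * Q + Q * Q = -((2 : ℂ) • H)
  rel_SS : S * S + S * S = -((2 : ℂ) • K)
  rel_XX : X * X + X * X = -M
  rel_QX : Q * X + X * Q = -P
  rel_SX : S * X + X * S = -G
  rel_QS : Q * S + S * Q = -D
  -- χ is an odd scalar: it commutes with the even generators, anticommutes with the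
  -- odd generators and satisfies χ² = m/2
  chi_H : Chi * H = H * Chi
  chi_P : Chi * P = P * Chi
  chi_G : Chi * G = G * Chi
  chi_D : Chi * D = D * Chi
  chi_K : Chi * K = K * Chi
  chi_M : Chi * M = M * Chi
  chi_Q : Chi * Q = -(Q * Chi)
  chi_S : Chi * S = -(S * Chi)
  chi_X : Chi * X = -(X * Chi)
  chi_sq : Chi * Chi = (m / 2) • (1 : Module.End ℂ V)
  -- the lowest weight vector
  v0 : V
  lw_Q : Q v0 = 0
  lw_P : P v0 = 0
  lw_D : D v0 = (-d) • v0
  lw_M : M v0 = m • v0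
  lw_X : X v0 = Chi v0
  -- PBW basis of the Verma module
  pbw_indep : LinearIndependent ℂ (fun i : ℕ × ℕ × Bool × Bool =>
    (G ^ i.1 * K ^ i.2.1 * (if i.2.2.1 then S else 1) * (if i.2.2.2 then Chi else 1)) v0)
  pbw_span : Submodule.span ℂ (Set.range (fun i : ℕ × ℕ × Bool × Bool =>
    (G ^ i.1 * K ^ i.2.1 * (if i.2.2.1 then S else 1) * (if i.2.2.2 then Chi else 1)) v0)) = ⊤

namespace SSch1Verma

variable {d m : ℂ} {V : Type*} [AddCommGroup V] [Module ℂ V]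

/-- A singular vector of the Verma module: homogeneous with respect to the `D`-grading
(i.e. a `D`-eigenvector), not a scalar multiple of the lowest weight vector `v₀`
(scalars being the coefficient superalgebra `ℂ[χ]`), and annihilated by `Q` and `P`. -/
def IsSingular (ρ : SSch1Verma d m V) (v : V) : Prop :=
  (∃ n : ℂ, ρ.D v = n • v) ∧
  (∀ a b : ℂ, v ≠ a • ρ.v0 + b • ρ.Chi ρ.v0) ∧
  ρ.Q v = 0 ∧ ρ.P v = 0

/-- A subspace invariant under the action of 𝔰(1/1) (and under the odd scalar χ). -/
def Invariant (ρ : SSch1Verma d m V) (W : Submodule ℂ V) : Prop :=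
  ∀ w ∈ W, ρ.H w ∈ W ∧ ρ.P w ∈ W ∧ ρ.G w ∈ W ∧ ρ.D w ∈ W ∧ ρ.K w ∈ W ∧
    ρ.M w ∈ W ∧ ρ.Q w ∈ W ∧ ρ.S w ∈ W ∧ ρ.X w ∈ W ∧ ρ.Chi w ∈ W

/-- The submodule generated by a set of vectors: the smallest invariant subspace
containing it. -/
def gen (ρ : SSch1Verma d m V) (s : Set V) : Submodule ℂ V :=
  sInf {W | ρ.Invariant W ∧ s ⊆ W}

/-- A singular vector of the factor module `V/J`, expressed in terms of representatives:
homogeneous with respect to the induced `D`-grading, not a scalar multiple of the image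
of the lowest weight vector, and annihilated by the induced actions of `Q` and `P`. -/
def IsSingularMod (ρ : SSch1Verma d m V) (J : Submodule ℂ V) (v : V) : Prop :=
  (∃ n : ℂ, ρ.D v - n • v ∈ J) ∧
  (∀ a b : ℂ, v - (a • ρ.v0 + b • ρ.Chi ρ.v0) ∉ J) ∧
  ρ.Q v ∈ J ∧ ρ.P v ∈ J

end SSch1Verma

/-! Write `u₀ = α G v₀ - b S χ v₀` and expand `P v_s` in the PBW basis `G^k K^ℓ v₀`,
`G^k K^ℓ S χ v₀`. Commuting `P` past `G^k K^ℓ` lowers the `K`-degree by at most one, so at the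
largest `t` with `a_t ≠ 0` the coordinates of `P v_s` at `G^{n-2t} K^t v₀` and
`G^{n-2t-1} K^t S χ v₀` come from the summand `a_t G^{n-2t} K^t u₀` alone; they are
`a_t ((n-2t+1)α + b/2) m` and `-a_t b (n-2t) m`. Their vanishing forces
`(n-2t+1)(α + b/2) m = 0`, while `P u₀ = (α + b/2) m v₀`. The identities `H u₀ = 0` and
`D u₀ = -(d-1) u₀` hold for every `u₀` of this form. -/

theorem mul_pow_eq_pow_mul_add {R : Type*} [Ring R] {p g z : R}
    (h : p * g = g * p + z) (hz : Commute g z) (k : ℕ) :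
    p * g ^ k = g ^ k * p + k • (g ^ (k - 1) * z) := by
  induction k with
  | zero => simp
  | succ k ih =>
    rcases k with _ | k
    · simpa using h
    · have hzg : g ^ k * z * g = g ^ (k + 1) * z := by
        rw [mul_assoc, ← hz.eq, ← mul_assoc, ← pow_succ]
      rw [pow_succ, ← mul_assoc, ih, add_mul, mul_assoc, h, mul_add, ← mul_assoc, ← pow_succ,
        smul_mul_assoc, Nat.add_sub_cancel, hzg, succ_nsmul _ (k + 1), Nat.add_sub_cancel]
      abel

theorem Finset.exists_greatest_ne_zero {ι M : Type*} [LinearOrder ι] [Zero M] {s : Finset ι}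
    {a : ι → M} (h : ∃ i ∈ s, a i ≠ 0) :
    ∃ t ∈ s, a t ≠ 0 ∧ ∀ i ∈ s, t < i → a i = 0 := by
  classical
  obtain ⟨t, hts, htmax⟩ := Finset.exists_max_image (s.filter (a · ≠ 0)) id (by
    obtain ⟨i, his, hi⟩ := h
    exact ⟨i, Finset.mem_filter.mpr ⟨his, hi⟩⟩)
  rw [Finset.mem_filter] at hts
  refine ⟨t, hts.1, hts.2, fun i his hti => ?_⟩
  by_contra hi
  exact (htmax i (Finset.mem_filter.mpr ⟨his, hi⟩)).not_gt hti

theorem Module.End.apply_apply_of_mul_sub_mul_eq {R M : Type*} [Semiring R] [AddCommGroup M]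
    [Module R M] {f g z : Module.End R M} (h : f * g - g * f = z) (v : M) :
    f (g v) = g (f v) + z v := by
  rw [← h]; simp

namespace SSch1Verma

variable {d m : ℂ} {V : Type*} [AddCommGroup V] [Module ℂ V] (ρ : SSch1Verma d m V)

theorem H_v0 : ρ.H ρ.v0 = 0 := by
  have h := LinearMap.congr_fun ρ.rel_QQ ρ.v0
  simp only [LinearMap.add_apply, Module.End.mul_apply, ρ.lw_Q, map_zero, add_zero,
    LinearMap.neg_apply, LinearMap.smul_apply] at h
  simpa using h

theorem Chi_S_v0 : ρ.Chi (ρ.S ρ.v0) = -ρ.S (ρ.Chi ρ.v0) := by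
  simpa using LinearMap.congr_fun ρ.chi_S ρ.v0

theorem P_S_Chi_v0 : ρ.P (ρ.S (ρ.Chi ρ.v0)) = (-(m / 2)) • ρ.v0 := by
  have hP : ρ.P (ρ.Chi ρ.v0) = 0 := by
    rw [← Module.End.mul_apply, ← ρ.chi_P, Module.End.mul_apply, ρ.lw_P, map_zero]
  have hX : ρ.X (ρ.Chi ρ.v0) = -ρ.Chi (ρ.X ρ.v0) :=
    neg_eq_iff_eq_neg.mp (by simpa using (LinearMap.congr_fun ρ.chi_X ρ.v0).symm)
  rw [Module.End.apply_apply_of_mul_sub_mul_eq ρ.rel_PS, hP, map_zero, zero_add, hX, ρ.lw_X,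
    ← Module.End.mul_apply, ρ.chi_sq]
  simp

theorem M_S_Chi_v0 : ρ.M (ρ.S (ρ.Chi ρ.v0)) = m • ρ.S (ρ.Chi ρ.v0) := by
  rw [← Module.End.mul_apply, ← ρ.rel_SM, Module.End.mul_apply, ← Module.End.mul_apply ρ.M,
    ← ρ.chi_M, Module.End.mul_apply, ρ.lw_M, map_smul, map_smul]

theorem P_mul_G_pow (k : ℕ) :
    ρ.P * ρ.G ^ k = ρ.G ^ k * ρ.P + k • (ρ.G ^ (k - 1) * ρ.M) :=
  mul_pow_eq_pow_mul_add (by rw [← ρ.rel_PG]; abel) ρ.rel_GM k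

theorem P_mul_K_pow (l : ℕ) :
    ρ.P * ρ.K ^ l = ρ.K ^ l * ρ.P + l • (ρ.K ^ (l - 1) * ρ.G) :=
  mul_pow_eq_pow_mul_add (by rw [← ρ.rel_PK]; abel) ρ.rel_GK.symm l

theorem P_mul_G_pow_mul_K_pow (k l : ℕ) :
    ρ.P * (ρ.G ^ k * ρ.K ^ l) = ρ.G ^ k * ρ.K ^ l * ρ.P + l • (ρ.G ^ (k + 1) * ρ.K ^ (l - 1))
      + k • (ρ.G ^ (k - 1) * ρ.K ^ l * ρ.M) := by
  have hKG : ρ.K ^ (l - 1) * ρ.G = ρ.G * ρ.K ^ (l - 1) :=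
    (Commute.symm ρ.rel_GK).pow_left _ |>.eq
  have hMK : ρ.M * ρ.K ^ l = ρ.K ^ l * ρ.M := (Commute.symm ρ.rel_KM).pow_right _ |>.eq
  rw [← mul_assoc, P_mul_G_pow, add_mul, mul_assoc, P_mul_K_pow, mul_add, hKG, smul_mul_assoc,
    mul_assoc (ρ.G ^ (k - 1)), hMK, mul_smul_comm, ← mul_assoc, ← mul_assoc, ← mul_assoc,
    ← pow_succ]

theorem P_G_pow_K_pow_apply (k l : ℕ) {w : V} (hw : ρ.M w = m • w) :
    ρ.P ((ρ.G ^ k * ρ.K ^ l) w) = (ρ.G ^ k * ρ.K ^ l) (ρ.P w)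
      + (l : ℂ) • (ρ.G ^ (k + 1) * ρ.K ^ (l - 1)) w
      + ((k : ℂ) * m) • (ρ.G ^ (k - 1) * ρ.K ^ l) w := by
  rw [← Module.End.mul_apply ρ.P, P_mul_G_pow_mul_K_pow]
  simp only [LinearMap.add_apply, LinearMap.smul_apply, Module.End.mul_apply, hw, map_smul,
    Nat.cast_smul_eq_nsmul, mul_smul]

def pbwVec (k l : ℕ) : V := (ρ.G ^ k * ρ.K ^ l) ρ.v0

def pbwVecSChi (k l : ℕ) : V := (ρ.G ^ k * ρ.K ^ l) (ρ.S (ρ.Chi ρ.v0))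

theorem P_pbwVec (k l : ℕ) :
    ρ.P (ρ.pbwVec k l) =
      (l : ℂ) • ρ.pbwVec (k + 1) (l - 1) + ((k : ℂ) * m) • ρ.pbwVec (k - 1) l := by
  rw [pbwVec, P_G_pow_K_pow_apply ρ k l ρ.lw_M, ρ.lw_P, map_zero, zero_add]
  rfl

theorem P_pbwVecSChi (k l : ℕ) :
    ρ.P (ρ.pbwVecSChi k l) = (-(m / 2)) • ρ.pbwVec k l + (l : ℂ) • ρ.pbwVecSChi (k + 1) (l - 1)
      + ((k : ℂ) * m) • ρ.pbwVecSChi (k - 1) l := by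
  rw [pbwVecSChi, P_G_pow_K_pow_apply ρ k l ρ.M_S_Chi_v0, P_S_Chi_v0, map_smul]
  rfl

noncomputable def pbwBasis : Module.Basis (ℕ × ℕ × Bool × Bool) ℂ V :=
  .mk ρ.pbw_indep ρ.pbw_span.ge

theorem pbwBasis_repr_pbwVec (k l : ℕ) :
    ρ.pbwBasis.repr (ρ.pbwVec k l) = Finsupp.single (k, l, false, false) 1 := by
  have h : ρ.pbwBasis (k, l, false, false) = ρ.pbwVec k l := by simp [pbwBasis, pbwVec]
  rw [← h, Module.Basis.repr_self]

theorem pbwBasis_repr_pbwVecSChi (k l : ℕ) :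
    ρ.pbwBasis.repr (ρ.pbwVecSChi k l) = Finsupp.single (k, l, true, true) 1 := by
  have h : ρ.pbwBasis (k, l, true, true) = ρ.pbwVecSChi k l := by
    simp [pbwBasis, pbwVecSChi, Module.End.mul_apply]
  rw [← h, Module.Basis.repr_self]

def u0 (α b : ℂ) : V := α • ρ.G ρ.v0 + b • ρ.Chi (ρ.S ρ.v0)

theorem G_pow_K_pow_u0 (k l : ℕ) (α b : ℂ) :
    (ρ.G ^ k * ρ.K ^ l) (ρ.u0 α b) = α • ρ.pbwVec (k + 1) l - b • ρ.pbwVecSChi k l := by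
  have hG : ρ.G ^ k * ρ.K ^ l * ρ.G = ρ.G ^ (k + 1) * ρ.K ^ l := by
    rw [mul_assoc, (Commute.symm ρ.rel_GK).pow_left l |>.eq, ← mul_assoc, ← pow_succ]
  rw [u0, map_add, map_smul, map_smul, ← Module.End.mul_apply _ ρ.G, hG, Chi_S_v0, map_neg,
    smul_neg, ← sub_eq_add_neg]
  rfl

theorem P_u0 (α b : ℂ) : ρ.P (ρ.u0 α b) = ((α + b / 2) * m) • ρ.v0 := by
  have hG : ρ.P (ρ.G ρ.v0) = m • ρ.v0 := by
    rw [Module.End.apply_apply_of_mul_sub_mul_eq ρ.rel_PG, ρ.lw_P, map_zero, zero_add, ρ.lw_M]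
  rw [u0, map_add, map_smul, map_smul, hG, Chi_S_v0, map_neg, P_S_Chi_v0, smul_smul,
    neg_smul, neg_neg, smul_smul, ← add_smul]
  ring_nf

theorem H_u0 (α b : ℂ) : ρ.H (ρ.u0 α b) = 0 := by
  have hG : ρ.H (ρ.G ρ.v0) = 0 := by
    rw [Module.End.apply_apply_of_mul_sub_mul_eq ρ.rel_HG, H_v0, map_zero, zero_add, ρ.lw_P]
  have hChi : ρ.H (ρ.Chi ρ.v0) = 0 := by
    rw [← Module.End.mul_apply, ← ρ.chi_H, Module.End.mul_apply, H_v0, map_zero]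
  have hQChi : ρ.Q (ρ.Chi ρ.v0) = 0 := by
    have h := LinearMap.congr_fun ρ.chi_Q ρ.v0
    simp only [Module.End.mul_apply, LinearMap.neg_apply, ρ.lw_Q, map_zero] at h
    exact neg_eq_zero.mp h.symm
  rw [u0, map_add, map_smul, map_smul, hG, Chi_S_v0, map_neg,
    Module.End.apply_apply_of_mul_sub_mul_eq ρ.rel_HS, hChi, hQChi]
  simp

theorem D_u0 (α b : ℂ) : ρ.D (ρ.u0 α b) = (-(d - 1)) • ρ.u0 α b := by
  have hraise {T : Module.End ℂ V} (hT : ρ.D * T - T * ρ.D = T) :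
      ρ.D (T ρ.v0) = (-(d - 1)) • T ρ.v0 := by
    rw [Module.End.apply_apply_of_mul_sub_mul_eq hT, ρ.lw_D, map_smul,
      show -(d - 1) = -d + 1 by ring, add_smul, one_smul]
  have hG := hraise ρ.rel_DG
  have hS := hraise ρ.rel_DS
  have hChiS : ρ.D (ρ.Chi (ρ.S ρ.v0)) = (-(d - 1)) • ρ.Chi (ρ.S ρ.v0) := by
    rw [← Module.End.mul_apply, ← ρ.chi_D, Module.End.mul_apply, hS, map_smul]
  rw [u0, map_add, map_smul, map_smul, hG, hChiS, smul_comm α, smul_comm b, smul_add]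

theorem P_G_pow_K_pow_u0 (k l : ℕ) (α b : ℂ) :
    ρ.P ((ρ.G ^ k * ρ.K ^ l) (ρ.u0 α b)) =
      α • ((l : ℂ) • ρ.pbwVec (k + 2) (l - 1) + (((k : ℂ) + 1) * m) • ρ.pbwVec k l)
      - b • ((-(m / 2)) • ρ.pbwVec k l + (l : ℂ) • ρ.pbwVecSChi (k + 1) (l - 1)
        + ((k : ℂ) * m) • ρ.pbwVecSChi (k - 1) l) := by
  rw [G_pow_K_pow_u0, map_sub, map_smul, map_smul, P_pbwVec, P_pbwVecSChi, Nat.add_sub_cancel]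
  push_cast
  rfl

theorem repr_P_G_pow_K_pow_u0 (k l : ℕ) (α b : ℂ) (j : ℕ × ℕ × Bool × Bool) :
    ρ.pbwBasis.repr (ρ.P ((ρ.G ^ k * ρ.K ^ l) (ρ.u0 α b))) j =
      α * ((l : ℂ) * if (k + 2, l - 1, false, false) = j then 1 else 0)
      + α * (((k : ℂ) + 1) * m) * (if (k, l, false, false) = j then 1 else 0)
      + b * (m / 2) * (if (k, l, false, false) = j then 1 else 0)
      - b * ((l : ℂ) * if (k + 1, l - 1, true, true) = j then 1 else 0)
      - b * ((k : ℂ) * m) * (if (k - 1, l, true, true) = j then 1 else 0) := by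
  simp only [P_G_pow_K_pow_u0, map_sub, map_add, map_smul, pbwBasis_repr_pbwVec,
    pbwBasis_repr_pbwVecSChi, Finsupp.smul_apply, Finsupp.add_apply, Finsupp.sub_apply,
    Finsupp.single_apply, smul_eq_mul]
  ring

theorem repr_P_G_pow_K_pow_u0_of_lt {k l : ℕ} (α b : ℂ) {j : ℕ × ℕ × Bool × Bool}
    (hj : l < j.2.1) : ρ.pbwBasis.repr (ρ.P ((ρ.G ^ k * ρ.K ^ l) (ρ.u0 α b))) j = 0 := by
  obtain ⟨j₁, j₂, j₃, j₄⟩ := j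
  dsimp only at hj
  simp only [repr_P_G_pow_K_pow_u0, Prod.mk.injEq]
  split_ifs <;> first | omega | ring

theorem repr_P_G_pow_K_pow_u0_even (k l : ℕ) (α b : ℂ) :
    ρ.pbwBasis.repr (ρ.P ((ρ.G ^ k * ρ.K ^ l) (ρ.u0 α b))) (k, l, false, false) =
      (α * (k + 1) + b / 2) * m := by
  simp only [repr_P_G_pow_K_pow_u0, Prod.mk.injEq, Bool.true_eq_false, and_false, and_true,
    if_false, mul_zero, sub_zero]
  split_ifs <;> first | omega | ring

theorem repr_P_G_pow_K_pow_u0_odd (k l : ℕ) (α b : ℂ) :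
    ρ.pbwBasis.repr (ρ.P ((ρ.G ^ k * ρ.K ^ l) (ρ.u0 α b))) (k - 1, l, true, true) =
      -(b * k * m) := by
  simp only [repr_P_G_pow_K_pow_u0, Prod.mk.injEq, Bool.false_eq_true, and_false, and_true,
    if_false, mul_zero]
  split_ifs <;> first | omega | ring

def homogPolyGK (n : ℕ) (a : ℕ → ℂ) : Module.End ℂ V :=
  ∑ ℓ ∈ Finset.range (n / 2 + 1), a ℓ • (ρ.G ^ (n - 2 * ℓ) * ρ.K ^ ℓ)

variable {ρ} in
theorem repr_P_homogPolyGK_u0 {n t : ℕ} {a : ℕ → ℂ} (ht : t ∈ Finset.range (n / 2 + 1))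
    (htop : ∀ ℓ ∈ Finset.range (n / 2 + 1), t < ℓ → a ℓ = 0) (α b : ℂ)
    {j : ℕ × ℕ × Bool × Bool} (hj : j.2.1 = t) :
    ρ.pbwBasis.repr (ρ.P (ρ.homogPolyGK n a (ρ.u0 α b))) j =
      a t * ρ.pbwBasis.repr (ρ.P ((ρ.G ^ (n - 2 * t) * ρ.K ^ t) (ρ.u0 α b))) j := by
  rw [homogPolyGK, LinearMap.sum_apply, map_sum, map_sum, Finsupp.finsetSum_apply,
    Finset.sum_eq_single_of_mem t ht]
  · simp only [LinearMap.smul_apply, map_smul, Finsupp.smul_apply, smul_eq_mul]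
  · intro ℓ hℓ hne
    rcases hne.lt_or_gt with hlt | hgt
    · simp only [LinearMap.smul_apply, map_smul, Finsupp.smul_apply,
        ρ.repr_P_G_pow_K_pow_u0_of_lt α b (hj ▸ hlt), smul_zero]
    · simp only [htop ℓ hℓ hgt, zero_smul, map_zero, Finsupp.zero_apply, LinearMap.zero_apply]

end SSch1Verma

/-- If `v_s = f(G,K) u₀` with `u₀ = (αG + βS)v₀` (`β = bχ` an odd
scalar) and `f(G,K) = Σ_ℓ a_ℓ G^{n-2ℓ} K^ℓ` a (nonzero) homogeneous polynomial of degree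
`n`, and if `P v_s = 0`, then `P u₀ = 0`, and consequently `H u₀ = 0` and
`D u₀ = -(d-1) u₀`, i.e. `u₀` is a lowest weight vector for sch(1) of conformal weight
`d - 1`. -/
theorem statement1 {d m : ℂ} {V : Type*} [AddCommGroup V] [Module ℂ V]
    (ρ : SSch1Verma d m V) (n : ℕ) (a : ℕ → ℂ)
    (ha : ∃ ℓ ∈ Finset.range (n / 2 + 1), a ℓ ≠ 0)
    (α b : ℂ) (u0 : V)
    (hu0 : u0 = α • ρ.G ρ.v0 + b • ρ.Chi (ρ.S ρ.v0))
    (f : Module.End ℂ V)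
    (hf : f = ∑ ℓ ∈ Finset.range (n / 2 + 1), a ℓ • (ρ.G ^ (n - 2 * ℓ) * ρ.K ^ ℓ))
    (hPvs : ρ.P (f u0) = 0) :
    ρ.P u0 = 0 ∧ ρ.H u0 = 0 ∧ ρ.D u0 = (-(d - 1)) • u0 := by
  obtain rfl : u0 = ρ.u0 α b := hu0
  obtain rfl : f = ρ.homogPolyGK n a := hf
  refine ⟨?_, ρ.H_u0 α b, ρ.D_u0 α b⟩
  obtain ⟨t, ht, hat, htop⟩ := Finset.exists_greatest_ne_zero ha
  have hcoord (j : ℕ × ℕ × Bool × Bool) (hj : j.2.1 = t) :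
      ρ.pbwBasis.repr (ρ.P ((ρ.G ^ (n - 2 * t) * ρ.K ^ t) (ρ.u0 α b))) j = 0 := by
    have h := ρ.repr_P_homogPolyGK_u0 ht htop α b hj
    rw [hPvs, map_zero, Finsupp.zero_apply, eq_comm] at h
    exact (mul_eq_zero.mp h).resolve_left hat
  have heven := hcoord (n - 2 * t, t, false, false) rfl
  have hodd := hcoord (n - 2 * t - 1, t, true, true) rfl
  rw [ρ.repr_P_G_pow_K_pow_u0_even] at heven
  rw [ρ.repr_P_G_pow_K_pow_u0_odd] at hodd
  have hmass : ((n - 2 * t : ℕ) + 1 : ℂ) * ((α + b / 2) * m) = 0 := by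
    linear_combination heven - hodd / 2
  rw [ρ.P_u0, (mul_eq_zero.mp hmass).resolve_left (Nat.cast_add_one_ne_zero _), zero_smul]
end

section
/- Let m ≠ 0 and d = p − 1/2 for some p ∈ ℤ≥0. Then the vector v_s^p = (G² − 2mK)^p (G − 2χS) v₀ ∈ V^d is a singular vector, i.e., it is homogeneous with respect to the D-grading, not a scalar multiple of v₀, and satisfies Q v_s^p = P v_s^p = 0. -/
namespace SSch1Verma

variable {d m : ℂ} {V : Type*} [AddCommGroup V] [Module ℂ V]

private lemma comm_pt {A B C : Module.End ℂ V} (h : A * B - B * A = C) (u : V) :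
    A (B u) = C u + B (A u) := by
  have h' := congrFun (congrArg DFunLike.coe h) u
  simp only [LinearMap.sub_apply, Module.End.mul_apply] at h'
  exact sub_eq_iff_eq_add.mp h'

private lemma swap_pt {A B : Module.End ℂ V} (h : A * B = B * A) (u : V) :
    A (B u) = B (A u) := congrFun (congrArg DFunLike.coe h) u

private lemma anti_pt {A B C : Module.End ℂ V} (h : A * B + B * A = C) (u : V) :
    A (B u) = C u - B (A u) := by
  have h' := congrFun (congrArg DFunLike.coe h) u
  simp only [LinearMap.add_apply, Module.End.mul_apply] at h'
  exact eq_sub_iff_add_eq.mpr h'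

private lemma nswap_pt {A B : Module.End ℂ V} (h : A * B = -(B * A)) (u : V) :
    A (B u) = -(B (A u)) := by
  have h' := congrFun (congrArg DFunLike.coe h) u
  simpa using h'

variable (ρ : SSch1Verma d m V)

/-- The basis of the Verma module. -/
def fB (i : ℕ × ℕ × Bool × Bool) : V :=
  (ρ.G ^ i.1 * ρ.K ^ i.2.1 * (if i.2.2.1 then ρ.S else 1) *
    (if i.2.2.2 then ρ.Chi else 1)) ρ.v0

/-- The operator `T = G² − 2mK`. -/
def TT : Module.End ℂ V := ρ.G * ρ.G - (2 * m) • ρ.K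

/-- The vector `w = (G − 2χS) v₀`. -/
def wV : V := ρ.G ρ.v0 - (2 : ℂ) • ρ.Chi (ρ.S ρ.v0)

lemma QChi_pt (u : V) : ρ.Q (ρ.Chi u) = -(ρ.Chi (ρ.Q u)) :=
  nswap_pt (by rw [ρ.chi_Q, neg_neg]) u

lemma SChi_pt (u : V) : ρ.S (ρ.Chi u) = -(ρ.Chi (ρ.S u)) :=
  nswap_pt (by rw [ρ.chi_S, neg_neg]) u

lemma XChi_pt (u : V) : ρ.X (ρ.Chi u) = -(ρ.Chi (ρ.X u)) :=
  nswap_pt (by rw [ρ.chi_X, neg_neg]) u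

lemma ChiChi_pt (u : V) : ρ.Chi (ρ.Chi u) = (m / 2) • u := by
  have h' := congrFun (congrArg DFunLike.coe ρ.chi_sq) u
  simpa using h'

lemma M_pt (u : V) : ρ.M u = m • u := by
  have hMG : Commute ρ.M ρ.G := ρ.rel_GM.symm
  have hMK : Commute ρ.M ρ.K := ρ.rel_KM.symm
  have hMS : Commute ρ.M ρ.S := ρ.rel_SM.symm
  have hMC : Commute ρ.M ρ.Chi := ρ.chi_M.symm
  have key : (⊤ : Submodule ℂ V) ≤ LinearMap.ker (ρ.M - m • (1 : Module.End ℂ V)) := by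
    rw [← ρ.pbw_span, Submodule.span_le]
    rintro _ ⟨i, rfl⟩
    have hc : Commute ρ.M (ρ.G ^ i.1 * ρ.K ^ i.2.1 * (if i.2.2.1 then ρ.S else 1) *
        (if i.2.2.2 then ρ.Chi else 1)) := by
      refine (((hMG.pow_right _).mul_right (hMK.pow_right _)).mul_right ?_).mul_right ?_
      · cases hb : i.2.2.1
        · simpa using Commute.one_right ρ.M
        · simpa using hMS
      · cases hb : i.2.2.2
        · simpa using Commute.one_right ρ.M
        · simpa using hMC
    simp only [SetLike.mem_coe, LinearMap.mem_ker, LinearMap.sub_apply,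
      LinearMap.smul_apply, Module.End.one_apply]
    rw [← Module.End.mul_apply, hc.eq, Module.End.mul_apply, ρ.lw_M, map_smul, sub_self]
  have h2 := key (Submodule.mem_top : u ∈ (⊤ : Submodule ℂ V))
  rw [LinearMap.mem_ker, LinearMap.sub_apply, LinearMap.smul_apply, Module.End.one_apply,
    sub_eq_zero] at h2
  exact h2

end SSch1Verma
namespace SSch1Verma

variable {d m : ℂ} {V : Type*} [AddCommGroup V] [Module ℂ V] (ρ : SSch1Verma d m V)

lemma P_w : ρ.P (wV ρ) = 0 := by
  have h2 : ρ.P (ρ.S ρ.v0) = ρ.Chi ρ.v0 := by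
    rw [comm_pt ρ.rel_PS, ρ.lw_P, map_zero, add_zero, ρ.lw_X]
  have h1 : ρ.P (ρ.G ρ.v0) = m • ρ.v0 := by
    rw [comm_pt ρ.rel_PG, ρ.lw_P, map_zero, add_zero, ρ.lw_M]
  have h3 : ρ.P (ρ.Chi (ρ.S ρ.v0)) = (m / 2) • ρ.v0 := by
    rw [swap_pt ρ.chi_P.symm, h2, ChiChi_pt]
  rw [wV, map_sub, map_smul, h1, h3]
  module

lemma Q_w : ρ.Q (wV ρ) = (1 + 2 * d) • ρ.Chi ρ.v0 := by
  have h1 : ρ.Q (ρ.G ρ.v0) = ρ.Chi ρ.v0 := by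
    rw [comm_pt ρ.rel_QG, ρ.lw_Q, map_zero, add_zero, ρ.lw_X]
  have h2 : ρ.Q (ρ.S ρ.v0) = d • ρ.v0 := by
    have h := anti_pt ρ.rel_QS ρ.v0
    rw [ρ.lw_Q, map_zero, sub_zero] at h
    rw [h, LinearMap.neg_apply, ρ.lw_D, neg_smul, neg_neg]
  have h3 : ρ.Q (ρ.Chi (ρ.S ρ.v0)) = -(d • ρ.Chi ρ.v0) := by
    rw [QChi_pt, h2, map_smul]
  rw [wV, map_sub, map_smul, h1, h3]
  module

lemma D_w : ρ.D (wV ρ) = (1 - d) • wV ρ := by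
  have h1 : ρ.D (ρ.G ρ.v0) = (1 - d) • ρ.G ρ.v0 := by
    rw [comm_pt ρ.rel_DG, ρ.lw_D, map_smul]; module
  have h2 : ρ.D (ρ.S ρ.v0) = (1 - d) • ρ.S ρ.v0 := by
    rw [comm_pt ρ.rel_DS, ρ.lw_D, map_smul]; module
  have h3 : ρ.D (ρ.Chi (ρ.S ρ.v0)) = (1 - d) • ρ.Chi (ρ.S ρ.v0) := by
    rw [swap_pt ρ.chi_D.symm, h2, map_smul]
  rw [wV, map_sub, map_smul, h1, h3]; module

lemma TT_apply (u : V) : TT ρ u = ρ.G (ρ.G u) - (2 * m) • ρ.K u := by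
  simp [TT, LinearMap.sub_apply, LinearMap.smul_apply, Module.End.mul_apply]

lemma G_TT (u : V) : ρ.G (TT ρ u) = TT ρ (ρ.G u) := by
  rw [TT_apply, TT_apply, map_sub, map_smul, swap_pt ρ.rel_GK]

lemma X_TT (u : V) : ρ.X (TT ρ u) = TT ρ (ρ.X u) := by
  rw [TT_apply, TT_apply, map_sub, map_smul, swap_pt ρ.rel_XG, swap_pt ρ.rel_XG,
    swap_pt ρ.rel_XK]

lemma S_TT (u : V) : ρ.S (TT ρ u) = TT ρ (ρ.S u) := by
  rw [TT_apply, TT_apply, map_sub, map_smul, swap_pt ρ.rel_SG, swap_pt ρ.rel_SG,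
    swap_pt ρ.rel_SK]

lemma Chi_TT (u : V) : ρ.Chi (TT ρ u) = TT ρ (ρ.Chi u) := by
  rw [TT_apply, TT_apply, map_sub, map_smul, swap_pt ρ.chi_G, swap_pt ρ.chi_G,
    swap_pt ρ.chi_K]

lemma D_TT (u : V) : ρ.D (TT ρ u) = TT ρ (ρ.D u) + (2 : ℂ) • TT ρ u := by
  have hG : ∀ x : V, ρ.D (ρ.G x) = ρ.G x + ρ.G (ρ.D x) := fun x => comm_pt ρ.rel_DG x
  have hK : ∀ x : V, ρ.D (ρ.K x) = (2 : ℂ) • ρ.K x + ρ.K (ρ.D x) := by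
    intro x
    have := comm_pt ρ.rel_DK x
    simpa [LinearMap.smul_apply] using this
  simp only [TT_apply]
  rw [map_sub, map_smul, hG, hG, hK]
  try simp only [map_add, map_smul]
  module

lemma P_TT (u : V) : ρ.P (TT ρ u) = TT ρ (ρ.P u) := by
  have hG : ∀ x : V, ρ.P (ρ.G x) = m • x + ρ.G (ρ.P x) := by
    intro x; rw [comm_pt ρ.rel_PG, M_pt]
  have hK : ∀ x : V, ρ.P (ρ.K x) = ρ.G x + ρ.K (ρ.P x) := fun x => comm_pt ρ.rel_PK x
  simp only [TT_apply]
  rw [map_sub, map_smul, hG, hG, map_add, map_smul, hK]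
  try simp only [map_add, map_smul]
  module

lemma Q_TT (u : V) :
    ρ.Q (TT ρ u) = TT ρ (ρ.Q u) + (2 : ℂ) • ρ.G (ρ.X u) - (2 * m) • ρ.S u := by
  have hG : ∀ x : V, ρ.Q (ρ.G x) = ρ.X x + ρ.G (ρ.Q x) := fun x => comm_pt ρ.rel_QG x
  have hK : ∀ x : V, ρ.Q (ρ.K x) = ρ.S x + ρ.K (ρ.Q x) := fun x => comm_pt ρ.rel_QK x
  simp only [TT_apply]
  rw [map_sub, map_smul, hG, hG, map_add, hK, swap_pt ρ.rel_XG]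
  try simp only [map_add, map_smul]
  module

end SSch1Verma
namespace SSch1Verma

variable {d m : ℂ} {V : Type*} [AddCommGroup V] [Module ℂ V] (ρ : SSch1Verma d m V)

lemma SS_v0 : ρ.S (ρ.S ρ.v0) = -(ρ.K ρ.v0) := by
  have h := anti_pt ρ.rel_SS ρ.v0
  have h2 : ρ.S (ρ.S ρ.v0) + ρ.S (ρ.S ρ.v0) = -((2 : ℂ) • ρ.K ρ.v0) := by
    have := eq_sub_iff_add_eq.mp h
    simpa [LinearMap.neg_apply, LinearMap.smul_apply] using this
  have h3 : (2 : ℂ) • ρ.S (ρ.S ρ.v0) = (2 : ℂ) • (-(ρ.K ρ.v0)) := by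
    rw [two_smul]; rw [h2]; module
  exact smul_right_injective V two_ne_zero h3

lemma XS_v0 : ρ.X (ρ.S ρ.v0) = -(ρ.G ρ.v0) + ρ.Chi (ρ.S ρ.v0) := by
  have h := anti_pt (show ρ.X * ρ.S + ρ.S * ρ.X = -ρ.G by rw [add_comm]; exact ρ.rel_SX) ρ.v0
  rw [ρ.lw_X] at h
  rw [h, SChi_pt, LinearMap.neg_apply]
  module

lemma X_w : ρ.X (wV ρ) = -(ρ.G (ρ.Chi ρ.v0)) + m • ρ.S ρ.v0 := by
  have h1 : ρ.X (ρ.G ρ.v0) = ρ.G (ρ.Chi ρ.v0) := by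
    rw [swap_pt ρ.rel_XG, ρ.lw_X]
  have h2 : ρ.X (ρ.Chi (ρ.S ρ.v0)) = ρ.G (ρ.Chi ρ.v0) - (m / 2) • ρ.S ρ.v0 := by
    rw [XChi_pt, XS_v0, map_add, map_neg, ChiChi_pt, swap_pt ρ.chi_G.symm]
    module
  rw [wV, map_sub, map_smul, h1, h2]
  module

lemma S_w : ρ.S (wV ρ) = ρ.G (ρ.S ρ.v0) - (2 : ℂ) • ρ.K (ρ.Chi ρ.v0) := by
  have h1 : ρ.S (ρ.G ρ.v0) = ρ.G (ρ.S ρ.v0) := swap_pt ρ.rel_SG ρ.v0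
  have h2 : ρ.S (ρ.Chi (ρ.S ρ.v0)) = ρ.K (ρ.Chi ρ.v0) := by
    rw [SChi_pt, SS_v0, map_neg, swap_pt ρ.chi_K.symm, neg_neg]
  rw [wV, map_sub, map_smul, h1, h2]

lemma GXmS_w :
    (2 : ℂ) • ρ.G (ρ.X (wV ρ)) - (2 * m) • ρ.S (wV ρ) = -((2 : ℂ) • TT ρ (ρ.Chi ρ.v0)) := by
  rw [X_w, S_w, map_add, map_neg, map_smul, swap_pt ρ.rel_SG.symm, TT_apply]
  module

lemma TT_pow_succ (j : ℕ) (u : V) : (TT ρ ^ (j + 1)) u = TT ρ ((TT ρ ^ j) u) := by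
  rw [pow_succ']; rfl

lemma pow_comm_pt {A : Module.End ℂ V} (hA : ∀ u, A (TT ρ u) = TT ρ (A u)) :
    ∀ (j : ℕ) (u : V), A ((TT ρ ^ j) u) = (TT ρ ^ j) (A u) := by
  intro j
  induction j with
  | zero => intro u; simp
  | succ j ih =>
    intro u
    rw [TT_pow_succ, hA, ih, TT_pow_succ]

lemma P_pow (j : ℕ) : ρ.P ((TT ρ ^ j) (wV ρ)) = 0 := by
  induction j with
  | zero => simpa using P_w ρ
  | succ j ih => rw [TT_pow_succ, P_TT, ih, map_zero]

lemma D_pow (j : ℕ) : ρ.D ((TT ρ ^ j) (wV ρ)) = (1 - d + 2 * j) • (TT ρ ^ j) (wV ρ) := by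
  induction j with
  | zero => simpa using D_w ρ
  | succ j ih =>
    rw [TT_pow_succ, D_TT, ih, map_smul, ← TT_pow_succ]
    push_cast
    module

lemma Q_pow (j : ℕ) :
    ρ.Q ((TT ρ ^ j) (wV ρ)) = (1 + 2 * d - 2 * j) • (TT ρ ^ j) (ρ.Chi ρ.v0) := by
  induction j with
  | zero => simpa using Q_w ρ
  | succ j ih =>
    have hGX : ∀ u, (ρ.G ∘ₗ ρ.X) (TT ρ u) = TT ρ ((ρ.G ∘ₗ ρ.X) u) := by
      intro u
      simp only [LinearMap.comp_apply]
      rw [X_TT, G_TT]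
    have hX : ρ.G (ρ.X ((TT ρ ^ j) (wV ρ))) = (TT ρ ^ j) (ρ.G (ρ.X (wV ρ))) := by
      have := pow_comm_pt ρ hGX j (wV ρ)
      simpa [LinearMap.comp_apply] using this
    have hS : ρ.S ((TT ρ ^ j) (wV ρ)) = (TT ρ ^ j) (ρ.S (wV ρ)) :=
      pow_comm_pt ρ (S_TT ρ) j (wV ρ)
    have hcomb := congrArg (⇑(TT ρ ^ j)) (GXmS_w ρ)
    rw [map_sub, map_smul, map_smul, map_neg, map_smul] at hcomb
    have hTT : (TT ρ ^ j) (TT ρ (ρ.Chi ρ.v0)) = (TT ρ ^ (j + 1)) (ρ.Chi ρ.v0) := by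
      rw [pow_succ]; rfl
    rw [TT_pow_succ, Q_TT, ih, map_smul, ← TT_pow_succ, hX, hS]
    rw [hTT] at hcomb
    rw [add_sub_assoc, hcomb]
    push_cast
    module

end SSch1Verma
namespace SSch1Verma

variable {d m : ℂ} {V : Type*} [AddCommGroup V] [Module ℂ V] (ρ : SSch1Verma d m V)

lemma fB_eq : (fun i : ℕ × ℕ × Bool × Bool =>
    (ρ.G ^ i.1 * ρ.K ^ i.2.1 * (if i.2.2.1 then ρ.S else 1) *
      (if i.2.2.2 then ρ.Chi else 1)) ρ.v0) = fB ρ := rfl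

lemma fB_ff (a b : ℕ) : fB ρ (a, b, false, false) = (ρ.G ^ a * ρ.K ^ b) ρ.v0 := by
  simp [fB]

lemma fB_tt (a b : ℕ) : fB ρ (a, b, true, true) = (ρ.G ^ a * ρ.K ^ b * ρ.S * ρ.Chi) ρ.v0 := by
  simp [fB]

lemma fB_v0 : fB ρ (0, 0, false, false) = ρ.v0 := by simp [fB]

lemma fB_chiv0 : fB ρ (0, 0, false, true) = ρ.Chi ρ.v0 := by simp [fB]

lemma GK_w (a b : ℕ) :
    (ρ.G ^ a) ((ρ.K ^ b) (wV ρ)) =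
      fB ρ (a + 1, b, false, false) + (2 : ℂ) • fB ρ (a, b, true, true) := by
  have hGK : Commute ρ.G ρ.K := ρ.rel_GK
  have h1 : (ρ.G ^ a) ((ρ.K ^ b) (ρ.G ρ.v0)) = fB ρ (a + 1, b, false, false) := by
    have hop : ρ.G ^ a * (ρ.K ^ b * ρ.G) = ρ.G ^ (a + 1) * ρ.K ^ b := by
      rw [(hGK.symm.pow_left b).eq, ← mul_assoc, ← pow_succ]
    calc (ρ.G ^ a) ((ρ.K ^ b) (ρ.G ρ.v0)) = (ρ.G ^ a * (ρ.K ^ b * ρ.G)) ρ.v0 := rfl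
      _ = (ρ.G ^ (a + 1) * ρ.K ^ b) ρ.v0 := by rw [hop]
      _ = fB ρ (a + 1, b, false, false) := (fB_ff ρ _ _).symm
  have h2 : (ρ.G ^ a) ((ρ.K ^ b) (ρ.Chi (ρ.S ρ.v0))) = -(fB ρ (a, b, true, true)) := by
    have hop : ρ.G ^ a * (ρ.K ^ b * (ρ.Chi * ρ.S)) = -(ρ.G ^ a * ρ.K ^ b * ρ.S * ρ.Chi) := by
      rw [ρ.chi_S]
      simp only [mul_neg, neg_mul, mul_assoc]
    calc (ρ.G ^ a) ((ρ.K ^ b) (ρ.Chi (ρ.S ρ.v0)))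
        = (ρ.G ^ a * (ρ.K ^ b * (ρ.Chi * ρ.S))) ρ.v0 := rfl
      _ = (-(ρ.G ^ a * ρ.K ^ b * ρ.S * ρ.Chi)) ρ.v0 := by rw [hop]
      _ = -(fB ρ (a, b, true, true)) := by rw [fB_tt]; simp
  rw [wV, map_sub, map_smul, map_sub, map_smul, h1, h2]
  module

lemma expand (p : ℕ) :
    (TT ρ ^ p) (wV ρ) = ∑ j ∈ Finset.range (p + 1),
      ((p.choose j : ℂ) * (-(2 * m)) ^ (p - j)) •
        (fB ρ (2 * j + 1, p - j, false, false) +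
          (2 : ℂ) • fB ρ (2 * j, p - j, true, true)) := by
  have hGK : Commute ρ.G ρ.K := ρ.rel_GK
  have hcomm : Commute (ρ.G * ρ.G) ((-(2 * m)) • ρ.K) :=
    ((hGK.mul_left hGK).smul_right _)
  have hT : TT ρ = ρ.G * ρ.G + (-(2 * m)) • ρ.K := by
    rw [TT, neg_smul, ← sub_eq_add_neg]
  rw [hT, hcomm.add_pow, LinearMap.sum_apply]
  refine Finset.sum_congr rfl fun j hj => ?_
  have hGG : (ρ.G * ρ.G) ^ j = ρ.G ^ (2 * j) := by
    rw [← sq, ← pow_mul]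
  rw [smul_pow, hGG]
  rw [Module.End.mul_apply, Module.End.mul_apply, LinearMap.smul_apply]
  rw [Module.End.natCast_apply]
  rw [map_smul, map_nsmul, map_nsmul, GK_w, ← Nat.cast_smul_eq_nsmul ℂ]
  module

end SSch1Verma
namespace SSch1Verma

variable {d m : ℂ} {V : Type*} [AddCommGroup V] [Module ℂ V] (ρ : SSch1Verma d m V)

lemma nontriv (p : ℕ) : ∀ a b : ℂ, (TT ρ ^ p) (wV ρ) ≠ a • ρ.v0 + b • ρ.Chi ρ.v0 := by
  intro a b heq
  classical
  set c : ℕ → ℂ := fun j => (p.choose j : ℂ) * (-(2 * m)) ^ (p - j) with hc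
  set l : (ℕ × ℕ × Bool × Bool) →₀ ℂ :=
    (∑ j ∈ Finset.range (p + 1),
      (Finsupp.single (2 * j + 1, p - j, false, false) (c j) +
       Finsupp.single (2 * j, p - j, true, true) (2 * c j)))
    - Finsupp.single (0, 0, false, false) a - Finsupp.single (0, 0, false, true) b with hldef
  have hcomb : Finsupp.linearCombination ℂ (fB ρ) l = 0 := by
    rw [hldef, map_sub, map_sub, map_sum]
    simp only [map_add, Finsupp.linearCombination_single]
    have hterm : ∀ j ∈ Finset.range (p + 1),
        c j • fB ρ (2 * j + 1, p - j, false, false) +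
          (2 * c j) • fB ρ (2 * j, p - j, true, true)
        = c j • (fB ρ (2 * j + 1, p - j, false, false) +
            (2 : ℂ) • fB ρ (2 * j, p - j, true, true)) := by
      intro j _; module
    rw [Finset.sum_congr rfl hterm]
    simp only [hc]
    rw [← expand ρ p, fB_v0, fB_chiv0, heq]
    abel
  have hind : LinearIndependent ℂ (fB ρ) := fB_eq ρ ▸ ρ.pbw_indep
  have hz : l = 0 := linearIndependent_iff.mp hind l hcomb
  have h1 : l (2 * p + 1, 0, false, false) = 1 := by
    rw [hldef]
    simp only [Finsupp.coe_sub, Pi.sub_apply, Finsupp.coe_finset_sum, Finset.sum_apply,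
      Finsupp.add_apply, Finsupp.single_apply]
    rw [Finset.sum_eq_single_of_mem p (Finset.self_mem_range_succ p)
      (fun j _ hjne => by
        rw [if_neg (by simp only [Prod.mk.injEq]; intro h; omega),
          if_neg (by simp only [Prod.mk.injEq]; intro h; omega), add_zero])]
    rw [if_pos (by simp), if_neg (by simp), if_neg (by simp only [Prod.mk.injEq]; omega),
      if_neg (by simp only [Prod.mk.injEq]; omega)]
    simp [hc]
  rw [hz] at h1
  simp at h1

end SSch1Verma
/-- For `m ≠ 0` and `d = p - 1/2` (`p ∈ ℤ≥0`), the vector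
`v_s^p = (G² - 2mK)^p (G - 2χS) v₀` is a singular vector of the Verma module `V^d`. -/
theorem statement2 {d m : ℂ} {V : Type*} [AddCommGroup V] [Module ℂ V]
    (ρ : SSch1Verma d m V) (hm : m ≠ 0) (p : ℕ) (hd : d = (p : ℂ) - 1/2) :
    ρ.IsSingular (((ρ.G * ρ.G - (2 * m) • ρ.K) ^ p) (ρ.G ρ.v0 - (2 : ℂ) • ρ.Chi (ρ.S ρ.v0))) := by
  have hT : ρ.G * ρ.G - (2 * m) • ρ.K = SSch1Verma.TT ρ := rfl
  have hw : ρ.G ρ.v0 - (2 : ℂ) • ρ.Chi (ρ.S ρ.v0) = SSch1Verma.wV ρ := rfl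
  rw [hT, hw]
  refine ⟨⟨1 - d + 2 * p, SSch1Verma.D_pow ρ p⟩, SSch1Verma.nontriv ρ p, ?_,
    SSch1Verma.P_pow ρ p⟩
  rw [SSch1Verma.Q_pow ρ p, show (1 + 2 * d - 2 * (p : ℂ)) = 0 by rw [hd]; ring, zero_smul]
end

section
/- Let m ≠ 0 and d = p − 1/2 for some p ∈ ℤ≥0, and let I^d ⊆ V^d be the submodule generated by the singular vector v_s^p = (G² − 2mK)^p (G − 2χS) v₀. Then the factor module V^d / I^d is irreducible. -/
/-!
Put `T = S - m⁻¹ G X`. The relations give `[P, T] = [T, G] = 0`, `{X, T} = {χ, T} = 0` and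
`2m T² = G² - 2mK`, so `V` is spanned by the vectors `vec (k, n, c) = G^k T^n χ^c v₀`, and the
singular vector is `2 (2m)^p T^(2p+1) χ v₀`. On these vectors `P` lowers `k` with factor `k m`, and
for `k = 0` the operator `Q` lowers `n` with a factor `q_n` (`q_{2r} = -r`,
`q_{2r+1} = d + 1/2 - r`) coming from `{Q, T} = -D + m⁻¹ G P + 1/2`. As `q_{2p+1} = 0`, the span
of the vectors with `n > 2p` is invariant, so it is the submodule generated by the singular vector.

Modulo that span, an element of an invariant `W` outside it is a nonzero combination of vectors
with `n ≤ 2p`. Applying `Q^N P^K`, where `(K, N)` is the lexicographically largest `(k, n)` that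
occurs, kills all other terms and, since `q_1, …, q_{2p} ≠ 0`, leaves a nonzero combination of `v₀`
and `χ v₀`. Then `χ - X` gives `v₀ ∈ W`, and `v₀` generates `V`.
-/

theorem mul_pow_succ_eq_of_mul_eq {R : Type*} [Ring R] {a b c : R} (h : a * b = b * a + c)
    (hc : Commute b c) (n : ℕ) : a * b ^ (n + 1) = b ^ (n + 1) * a + (n + 1) • (b ^ n * c) := by
  induction n with
  | zero => simpa using h
  | succ n ih =>
    rw [pow_succ b (n + 1), ← mul_assoc, ih, add_mul, mul_assoc, h, mul_add, ← mul_assoc,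
      ← pow_succ, smul_mul_assoc, mul_assoc, ← hc.eq, ← mul_assoc, ← pow_succ,
      succ_nsmul _ (n + 1)]
    abel

theorem Module.End.apply_pow_apply_of_mul_eq_neg {R M : Type*} [CommRing R] [AddCommGroup M]
    [Module R M] {A B : Module.End R M} (h : A * B = -(B * A)) (n : ℕ) (w : M) :
    A ((B ^ n) w) = ((-1 : R) ^ n) • (B ^ n) (A w) := by
  induction n with
  | zero => simp
  | succ n ih =>
    have hw := LinearMap.congr_fun h ((B ^ n) w)
    simp only [Module.End.mul_apply, LinearMap.neg_apply] at hw
    rw [pow_succ', Module.End.mul_apply, hw, ih, map_smul, pow_succ, Module.End.mul_apply]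
    module

namespace SSch1Verma

open Finset
open scoped Nat

variable {d m : ℂ} {V : Type*} [AddCommGroup V] [Module ℂ V] (ρ : SSch1Verma d m V)

theorem M_eq : ρ.M = m • 1 := by
  refine LinearMap.ext_on_range ρ.pbw_span fun ⟨k, l, e, c⟩ => ?_
  have hS : Commute ρ.M (if e then ρ.S else 1) := by
    cases e
    exacts [Commute.one_right _, ρ.rel_SM.symm]
  have hChi : Commute ρ.M (if c then ρ.Chi else 1) := by
    cases c
    exacts [Commute.one_right _, ρ.chi_M.symm]
  have hcomm :
      Commute ρ.M (ρ.G ^ k * ρ.K ^ l * (if e then ρ.S else 1) * (if c then ρ.Chi else 1)) :=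
    ((((Commute.pow_right ρ.rel_GM.symm k).mul_right
      (Commute.pow_right ρ.rel_KM.symm l)).mul_right hS).mul_right hChi)
  rw [← Module.End.mul_apply, hcomm.eq, Module.End.mul_apply, ρ.lw_M, map_smul]
  rfl

theorem M_apply (v : V) : ρ.M v = m • v := by
  rw [M_eq]; rfl

theorem X_X_apply (v : V) : ρ.X (ρ.X v) = -(m / 2) • v := by
  have h := LinearMap.congr_fun ρ.rel_XX v
  simp only [LinearMap.add_apply, Module.End.mul_apply, LinearMap.neg_apply, M_apply] at h
  calc ρ.X (ρ.X v) = (1 / 2 : ℂ) • (ρ.X (ρ.X v) + ρ.X (ρ.X v)) := by module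
    _ = -(m / 2) • v := by rw [h]; module

theorem Chi_Chi_apply (v : V) : ρ.Chi (ρ.Chi v) = (m / 2) • v :=
  LinearMap.congr_fun ρ.chi_sq v

noncomputable def T : Module.End ℂ V := ρ.S - m⁻¹ • (ρ.G * ρ.X)

theorem T_apply (v : V) : ρ.T v = ρ.S v - m⁻¹ • ρ.G (ρ.X v) := rfl

theorem X_G_apply (v : V) : ρ.X (ρ.G v) = ρ.G (ρ.X v) := LinearMap.congr_fun ρ.rel_XG v

theorem commute_T_G : Commute ρ.T ρ.G :=
  (show Commute ρ.S ρ.G from ρ.rel_SG).sub_left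
    (((Commute.refl ρ.G).mul_left (show Commute ρ.X ρ.G from ρ.rel_XG)).smul_left _)

theorem X_mul_T (hm : m ≠ 0) : ρ.X * ρ.T = -(ρ.T * ρ.X) := by
  ext v
  have hSX := LinearMap.congr_fun ρ.rel_SX v
  simp only [LinearMap.add_apply, Module.End.mul_apply, LinearMap.neg_apply] at hSX ⊢
  rw [T_apply, T_apply, map_sub, map_smul, X_G_apply, X_X_apply, map_smul,
    eq_sub_of_add_eq' hSX]
  match_scalars <;> field_simp
  ring

theorem Chi_mul_T : ρ.Chi * ρ.T = -(ρ.T * ρ.Chi) := by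
  ext v
  have hXChi := LinearMap.congr_fun ρ.chi_X v
  have hSChi := LinearMap.congr_fun ρ.chi_S v
  have hGChi := LinearMap.congr_fun ρ.chi_G (ρ.X v)
  simp only [Module.End.mul_apply, LinearMap.neg_apply] at hXChi hSChi hGChi ⊢
  rw [T_apply, T_apply, map_sub, map_smul, hGChi, hXChi, hSChi]
  simp only [map_neg]
  module

theorem commute_P_T (hm : m ≠ 0) : Commute ρ.P ρ.T := by
  ext v
  have hPS := LinearMap.congr_fun ρ.rel_PS v
  have hPG := LinearMap.congr_fun ρ.rel_PG (ρ.X v)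
  have hPX := LinearMap.congr_fun ρ.rel_XP v
  simp only [LinearMap.sub_apply, Module.End.mul_apply, M_apply] at hPS hPG hPX ⊢
  rw [T_apply, T_apply, map_sub, map_smul, eq_add_of_sub_eq hPS, eq_add_of_sub_eq hPG, ← hPX]
  match_scalars <;> field_simp
  ring

theorem S_S_apply (v : V) : ρ.S (ρ.S v) = -ρ.K v := by
  have h := LinearMap.congr_fun ρ.rel_SS v
  simp only [LinearMap.add_apply, Module.End.mul_apply, LinearMap.neg_apply,
    LinearMap.smul_apply] at h
  calc ρ.S (ρ.S v) = (1 / 2 : ℂ) • (ρ.S (ρ.S v) + ρ.S (ρ.S v)) := by module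
    _ = -ρ.K v := by rw [h]; module

theorem T_mul_T (hm : m ≠ 0) : (2 * m) • (ρ.T * ρ.T) = ρ.G * ρ.G - (2 * m) • ρ.K := by
  ext v
  have hSX := congrArg ρ.G (LinearMap.congr_fun ρ.rel_SX v)
  have hSG := LinearMap.congr_fun ρ.rel_SG (ρ.X v)
  simp only [LinearMap.add_apply, Module.End.mul_apply, LinearMap.neg_apply, map_add,
    map_neg] at hSX hSG
  simp only [LinearMap.sub_apply, LinearMap.smul_apply, Module.End.mul_apply, T_apply, map_sub,
    map_smul, X_G_apply, X_X_apply, S_S_apply, hSG, eq_sub_of_add_eq' hSX]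
  match_scalars <;> field_simp <;> ring

theorem D_T_apply (v : V) : ρ.D (ρ.T v) = ρ.T (ρ.D v) + ρ.T v := by
  have hDS := LinearMap.congr_fun ρ.rel_DS v
  have hDG := LinearMap.congr_fun ρ.rel_DG (ρ.X v)
  have hXD := LinearMap.congr_fun ρ.rel_XD v
  simp only [LinearMap.sub_apply, Module.End.mul_apply] at hDS hDG hXD
  simp only [T_apply, map_sub, map_smul, eq_add_of_sub_eq hDS, eq_add_of_sub_eq hDG, ← hXD]
  module

theorem Q_T_add_T_Q_apply (hm : m ≠ 0) (v : V) :
    ρ.Q (ρ.T v) + ρ.T (ρ.Q v) = -ρ.D v + m⁻¹ • ρ.G (ρ.P v) + (1 / 2 : ℂ) • v := by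
  have hQS := LinearMap.congr_fun ρ.rel_QS v
  have hQG := LinearMap.congr_fun ρ.rel_QG (ρ.X v)
  have hQX := congrArg ρ.G (LinearMap.congr_fun ρ.rel_QX v)
  simp only [LinearMap.add_apply, LinearMap.sub_apply, Module.End.mul_apply, LinearMap.neg_apply,
    map_add, map_neg] at hQS hQG hQX
  simp only [T_apply, map_sub, map_smul, eq_add_of_sub_eq hQG, X_X_apply]
  rw [← neg_neg (ρ.D v), ← hQS, ← neg_neg (ρ.G (ρ.P v)), ← hQX]
  match_scalars <;> field_simp

noncomputable def qCoeff (d : ℂ) : ℕ → ℂ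
  | 0 => 0
  | n + 1 => d + 1 / 2 - n - qCoeff d n

theorem qCoeff_two_mul (d : ℂ) (r : ℕ) :
    qCoeff d (2 * r) = -r ∧ qCoeff d (2 * r + 1) = d + 1 / 2 - r := by
  induction r with
  | zero => simp [qCoeff]
  | succ r ih =>
    have h2 : qCoeff d (2 * (r + 1)) = -(r + 1 : ℕ) := by
      rw [show 2 * (r + 1) = 2 * r + 1 + 1 by ring, qCoeff, ih.2]
      push_cast; ring
    refine ⟨h2, ?_⟩
    rw [qCoeff, h2]
    push_cast; ring

theorem qCoeff_ne_zero {p : ℕ} (hd : d = p - 1 / 2) {n : ℕ} (h0 : 0 < n) (hn : n ≤ 2 * p) :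
    qCoeff d n ≠ 0 := by
  obtain ⟨r, rfl | rfl⟩ := Nat.even_or_odd' n
  · rw [(qCoeff_two_mul d r).1, neg_ne_zero, Nat.cast_ne_zero]
    omega
  · rw [(qCoeff_two_mul d r).2, hd, sub_add_cancel, sub_ne_zero, Ne, Nat.cast_inj]
    omega

theorem qCoeff_two_mul_add_one_eq_zero {p : ℕ} (hd : d = p - 1 / 2) :
    qCoeff d (2 * p + 1) = 0 := by
  rw [(qCoeff_two_mul d p).2, hd]
  ring

theorem P_T_pow_apply (hm : m ≠ 0) (n : ℕ) {u : V} (hu : ρ.P u = 0) :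
    ρ.P ((ρ.T ^ n) u) = 0 := by
  rw [← Module.End.mul_apply, ((ρ.commute_P_T hm).pow_right n).eq, Module.End.mul_apply, hu,
    map_zero]

theorem D_T_pow_apply (n : ℕ) {u : V} (hu : ρ.D u = (-d) • u) :
    ρ.D ((ρ.T ^ n) u) = (n - d) • (ρ.T ^ n) u := by
  induction n with
  | zero => simpa [neg_smul] using hu
  | succ n ih =>
    rw [pow_succ', Module.End.mul_apply, D_T_apply, ih, map_smul]
    push_cast
    module

theorem Q_T_pow_apply (hm : m ≠ 0) (n : ℕ) {u : V} (hQ : ρ.Q u = 0) (hP : ρ.P u = 0)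
    (hD : ρ.D u = (-d) • u) : ρ.Q ((ρ.T ^ n) u) = qCoeff d n • (ρ.T ^ (n - 1)) u := by
  induction n with
  | zero => simp [qCoeff, hQ]
  | succ n ih =>
    have hTT : qCoeff d n • ρ.T ((ρ.T ^ (n - 1)) u) = qCoeff d n • (ρ.T ^ n) u := by
      cases n with
      | zero => simp [qCoeff]
      | succ n => rw [Nat.add_sub_cancel, ← Module.End.mul_apply, ← pow_succ']
    rw [pow_succ', Module.End.mul_apply,
      eq_sub_of_add_eq (ρ.Q_T_add_T_Q_apply hm _), ih, map_smul, hTT, D_T_pow_apply ρ n hD,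
      P_T_pow_apply ρ hm n hP, map_zero, smul_zero, qCoeff, Nat.add_sub_cancel]
    module

def lowest (c : Bool) : V := if c then ρ.Chi ρ.v0 else ρ.v0

theorem Q_lowest (c : Bool) : ρ.Q (ρ.lowest c) = 0 := by
  cases c
  · exact ρ.lw_Q
  · have h := LinearMap.congr_fun ρ.chi_Q ρ.v0
    simp only [Module.End.mul_apply, LinearMap.neg_apply, ρ.lw_Q, map_zero] at h
    exact neg_eq_zero.mp h.symm

theorem P_lowest (c : Bool) : ρ.P (ρ.lowest c) = 0 := by
  cases c
  · exact ρ.lw_P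
  · rw [lowest, if_pos rfl, ← Module.End.mul_apply, ← ρ.chi_P, Module.End.mul_apply, ρ.lw_P,
      map_zero]

theorem D_lowest (c : Bool) : ρ.D (ρ.lowest c) = (-d) • ρ.lowest c := by
  cases c
  · exact ρ.lw_D
  · rw [lowest, if_pos rfl, ← Module.End.mul_apply, ← ρ.chi_D, Module.End.mul_apply, ρ.lw_D,
      map_smul]

theorem Chi_lowest (c : Bool) :
    ρ.Chi (ρ.lowest c) = (if c then m / 2 else 1) • ρ.lowest (!c) := by
  cases c
  · simp [lowest]
  · simp [lowest, Chi_Chi_apply]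

theorem X_lowest (c : Bool) :
    ρ.X (ρ.lowest c) = (if c then -(m / 2) else 1) • ρ.lowest (!c) := by
  cases c
  · simp [lowest, ρ.lw_X]
  · have h := LinearMap.congr_fun ρ.chi_X ρ.v0
    simp only [Module.End.mul_apply, LinearMap.neg_apply, ρ.lw_X, Chi_Chi_apply] at h
    simp [lowest, h]

noncomputable def vec (i : ℕ × ℕ × Bool) : V :=
  (ρ.G ^ i.1) ((ρ.T ^ i.2.1) (ρ.lowest i.2.2))

theorem G_vec (k n : ℕ) (c : Bool) : ρ.G (ρ.vec (k, n, c)) = ρ.vec (k + 1, n, c) := by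
  rw [vec, vec, pow_succ', Module.End.mul_apply]

theorem T_vec (k n : ℕ) (c : Bool) : ρ.T (ρ.vec (k, n, c)) = ρ.vec (k, n + 1, c) := by
  rw [vec, vec, ← Module.End.mul_apply, (ρ.commute_T_G.pow_right k).eq, Module.End.mul_apply,
    ← Module.End.mul_apply ρ.T, ← pow_succ']

theorem Chi_vec (k n : ℕ) (c : Bool) :
    ρ.Chi (ρ.vec (k, n, c)) = ((-1) ^ n * if c then m / 2 else 1) • ρ.vec (k, n, !c) := by
  rw [vec, vec, ← Module.End.mul_apply, ((show Commute ρ.Chi ρ.G from ρ.chi_G).pow_right k).eq,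
    Module.End.mul_apply, Module.End.apply_pow_apply_of_mul_eq_neg ρ.Chi_mul_T, Chi_lowest,
    map_smul, map_smul, map_smul, smul_smul]

theorem X_vec (hm : m ≠ 0) (k n : ℕ) (c : Bool) :
    ρ.X (ρ.vec (k, n, c)) = ((-1) ^ n * if c then -(m / 2) else 1) • ρ.vec (k, n, !c) := by
  rw [vec, vec, ← Module.End.mul_apply, ((show Commute ρ.X ρ.G from ρ.rel_XG).pow_right k).eq,
    Module.End.mul_apply, Module.End.apply_pow_apply_of_mul_eq_neg (ρ.X_mul_T hm), X_lowest,
    map_smul, map_smul, map_smul, smul_smul]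

theorem P_vec (hm : m ≠ 0) (k n : ℕ) (c : Bool) :
    ρ.P (ρ.vec (k, n, c)) = (k * m) • ρ.vec (k - 1, n, c) := by
  have hPT := ρ.P_T_pow_apply hm n (ρ.P_lowest c)
  cases k with
  | zero => simpa [vec] using hPT
  | succ k =>
    have hPG : ρ.P * ρ.G = ρ.G * ρ.P + m • 1 := by
      rw [← ρ.M_eq, ← ρ.rel_PG, add_sub_cancel]
    have h := LinearMap.congr_fun (mul_pow_succ_eq_of_mul_eq hPG
      ((Commute.one_right ρ.G).smul_right m) k) ((ρ.T ^ n) (ρ.lowest c))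
    simp only [Module.End.mul_apply, LinearMap.add_apply, LinearMap.smul_apply, hPT, map_zero,
      Module.End.one_apply, map_smul] at h
    rw [vec, vec, h, zero_add, Nat.add_sub_cancel, ← Nat.cast_smul_eq_nsmul ℂ, smul_smul]

theorem Q_vec (hm : m ≠ 0) (k n : ℕ) (c : Bool) :
    ρ.Q (ρ.vec (k, n, c)) =
      qCoeff d n • ρ.vec (k, n - 1, c) + (k : ℂ) • ρ.X (ρ.vec (k - 1, n, c)) := by
  have hQT := ρ.Q_T_pow_apply hm n (ρ.Q_lowest c) (ρ.P_lowest c) (ρ.D_lowest c)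
  cases k with
  | zero => simpa [vec] using hQT
  | succ k =>
    have hQG : ρ.Q * ρ.G = ρ.G * ρ.Q + ρ.X := by
      rw [← ρ.rel_QG, add_sub_cancel]
    have h := LinearMap.congr_fun (mul_pow_succ_eq_of_mul_eq hQG
      (show Commute ρ.X ρ.G from ρ.rel_XG).symm k) ((ρ.T ^ n) (ρ.lowest c))
    have hXG := LinearMap.congr_fun (((show Commute ρ.X ρ.G from ρ.rel_XG).pow_right k).eq)
      ((ρ.T ^ n) (ρ.lowest c))
    simp only [Module.End.mul_apply, LinearMap.add_apply, LinearMap.smul_apply, hQT,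
      map_smul] at h hXG
    dsimp only [vec]
    rw [h, Nat.add_sub_cancel, ← Nat.cast_smul_eq_nsmul ℂ, hXG]

theorem S_apply (v : V) : ρ.S v = ρ.T v + m⁻¹ • ρ.G (ρ.X v) := by
  rw [T_apply, sub_add_cancel]

theorem K_apply (hm : m ≠ 0) (v : V) :
    ρ.K v = (2 * m)⁻¹ • ρ.G (ρ.G v) - ρ.T (ρ.T v) := by
  have h := LinearMap.congr_fun (ρ.T_mul_T hm) v
  simp only [LinearMap.smul_apply, LinearMap.sub_apply, Module.End.mul_apply] at h
  have h2m : (2 * m) ≠ 0 := mul_ne_zero two_ne_zero hm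
  rw [← inv_smul_smul₀ h2m (ρ.K v),
    show (2 * m) • ρ.K v = ρ.G (ρ.G v) - (2 * m) • ρ.T (ρ.T v) by rw [h]; abel,
    smul_sub, inv_smul_smul₀ h2m]

variable {ρ}

namespace Invariant

variable {W : Submodule ℂ V}

theorem P_mem (hW : ρ.Invariant W) : ∀ w ∈ W, ρ.P w ∈ W :=
  fun w hw => (hW w hw).2.1

theorem G_mem (hW : ρ.Invariant W) : ∀ w ∈ W, ρ.G w ∈ W :=
  fun w hw => (hW w hw).2.2.1

theorem Q_mem (hW : ρ.Invariant W) : ∀ w ∈ W, ρ.Q w ∈ W :=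
  fun w hw => (hW w hw).2.2.2.2.2.2.1

theorem S_mem (hW : ρ.Invariant W) : ∀ w ∈ W, ρ.S w ∈ W :=
  fun w hw => (hW w hw).2.2.2.2.2.2.2.1

theorem X_mem (hW : ρ.Invariant W) : ∀ w ∈ W, ρ.X w ∈ W :=
  fun w hw => (hW w hw).2.2.2.2.2.2.2.2.1

theorem Chi_mem (hW : ρ.Invariant W) : ∀ w ∈ W, ρ.Chi w ∈ W :=
  fun w hw => (hW w hw).2.2.2.2.2.2.2.2.2

theorem T_mem (hW : ρ.Invariant W) : ∀ w ∈ W, ρ.T w ∈ W := fun w hw =>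
  W.sub_mem (hW.S_mem w hw) (W.smul_mem _ (hW.G_mem _ (hW.X_mem w hw)))

end Invariant

variable (ρ)

theorem invariant_of_forall_mem {W : Submodule ℂ V} (hQ : ∀ w ∈ W, ρ.Q w ∈ W)
    (hS : ∀ w ∈ W, ρ.S w ∈ W) (hX : ∀ w ∈ W, ρ.X w ∈ W)
    (hChi : ∀ w ∈ W, ρ.Chi w ∈ W) :
    ρ.Invariant W := by
  intro w hw
  have anticomm {A B C : Module.End ℂ V} (h : A * B + B * A = C) (hA : ∀ w ∈ W, A w ∈ W)
      (hB : ∀ w ∈ W, B w ∈ W) : C w ∈ W := by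
    rw [← h]
    exact W.add_mem (hA _ (hB w hw)) (hB _ (hA w hw))
  have neg_mem {A : Module.End ℂ V} (h : -A w ∈ W) : A w ∈ W := by simpa using W.neg_mem h
  refine ⟨?_, neg_mem (anticomm ρ.rel_QX hQ hX), neg_mem (anticomm ρ.rel_SX hS hX),
    neg_mem (anticomm ρ.rel_QS hQ hS), ?_, ?_, hQ w hw, hS w hw, hX w hw, hChi w hw⟩
  · have h := anticomm ρ.rel_QQ hQ hQ
    simp only [LinearMap.neg_apply, LinearMap.smul_apply] at h
    simpa using W.smul_mem (-(1 / 2 : ℂ)) h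
  · have h := anticomm ρ.rel_SS hS hS
    simp only [LinearMap.neg_apply, LinearMap.smul_apply] at h
    simpa using W.smul_mem (-(1 / 2 : ℂ)) h
  · rw [M_apply]
    exact W.smul_mem m hw

theorem eq_top_of_forall_mem {W : Submodule ℂ V} (hG : ∀ w ∈ W, ρ.G w ∈ W)
    (hK : ∀ w ∈ W, ρ.K w ∈ W) (hS : ∀ w ∈ W, ρ.S w ∈ W)
    (hChi : ∀ w ∈ W, ρ.Chi w ∈ W)
    (h0 : ρ.v0 ∈ W) : W = ⊤ := by
  rw [eq_top_iff, ← ρ.pbw_span, Submodule.span_le]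
  rintro _ ⟨⟨k, l, e, c⟩, rfl⟩
  have hc : (if c then ρ.Chi else 1) ρ.v0 ∈ W := by
    cases c
    exacts [h0, hChi _ h0]
  have he : (if e then ρ.S else 1) ((if c then ρ.Chi else 1) ρ.v0) ∈ W := by
    cases e
    exacts [hc, hS _ hc]
  exact Module.End.pow_apply_mem_of_forall_mem k hG _
    (Module.End.pow_apply_mem_of_forall_mem l hK _ he)

def upperSpan (N : ℕ) : Submodule ℂ V := Submodule.span ℂ (ρ.vec '' {i | N ≤ i.2.1})

variable {ρ} {N : ℕ}

theorem vec_mem_upperSpan {k n : ℕ} (c : Bool) (h : N ≤ n) :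
    ρ.vec (k, n, c) ∈ ρ.upperSpan N :=
  Submodule.subset_span ⟨(k, n, c), h, rfl⟩

theorem upperSpan_stable {A : Module.End ℂ V}
    (h : ∀ k n c, N ≤ n → A (ρ.vec (k, n, c)) ∈ ρ.upperSpan N) :
    ∀ w ∈ ρ.upperSpan N, A w ∈ ρ.upperSpan N := fun _ hw =>
  (Submodule.span_le (p := (ρ.upperSpan N).comap A)).mpr
    (by rintro _ ⟨⟨k, n, c⟩, hn, rfl⟩; exact h k n c hn) hw

theorem upperSpan_G : ∀ w ∈ ρ.upperSpan N, ρ.G w ∈ ρ.upperSpan N :=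
  upperSpan_stable fun k n c hn => by
    rw [G_vec]; exact vec_mem_upperSpan c hn

theorem upperSpan_T : ∀ w ∈ ρ.upperSpan N, ρ.T w ∈ ρ.upperSpan N :=
  upperSpan_stable fun k n c hn => by
    rw [T_vec]; exact vec_mem_upperSpan c (by omega)

theorem upperSpan_Chi : ∀ w ∈ ρ.upperSpan N, ρ.Chi w ∈ ρ.upperSpan N :=
  upperSpan_stable fun k n c hn => by
    rw [Chi_vec]; exact Submodule.smul_mem _ _ (vec_mem_upperSpan _ hn)

theorem upperSpan_X (hm : m ≠ 0) : ∀ w ∈ ρ.upperSpan N, ρ.X w ∈ ρ.upperSpan N :=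
  upperSpan_stable fun k n c hn => by
    rw [X_vec ρ hm]; exact Submodule.smul_mem _ _ (vec_mem_upperSpan _ hn)

theorem upperSpan_S (hm : m ≠ 0) : ∀ w ∈ ρ.upperSpan N, ρ.S w ∈ ρ.upperSpan N :=
    fun w hw => by
  rw [S_apply]
  exact add_mem (upperSpan_T w hw) (Submodule.smul_mem _ _ (upperSpan_G _ (upperSpan_X hm w hw)))

theorem upperSpan_K (hm : m ≠ 0) : ∀ w ∈ ρ.upperSpan N, ρ.K w ∈ ρ.upperSpan N :=
    fun w hw => by
  rw [K_apply ρ hm]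
  exact sub_mem (Submodule.smul_mem _ _ (upperSpan_G _ (upperSpan_G w hw)))
    (upperSpan_T _ (upperSpan_T w hw))

theorem upperSpan_Q (hm : m ≠ 0) (hN : qCoeff d N = 0) :
    ∀ w ∈ ρ.upperSpan N, ρ.Q w ∈ ρ.upperSpan N :=
  upperSpan_stable fun k n c hn => by
    rw [Q_vec ρ hm]
    refine add_mem ?_ (Submodule.smul_mem _ _ (upperSpan_X hm _ (vec_mem_upperSpan c hn)))
    rcases hn.eq_or_lt with rfl | hlt
    · rw [hN, zero_smul]; exact zero_mem _
    · exact Submodule.smul_mem _ _ (vec_mem_upperSpan c (by omega))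

theorem upperSpan_invariant (hm : m ≠ 0) (hN : qCoeff d N = 0) : ρ.Invariant (ρ.upperSpan N) :=
  ρ.invariant_of_forall_mem (upperSpan_Q hm hN) (upperSpan_S hm) (upperSpan_X hm) upperSpan_Chi

theorem upperSpan_zero (hm : m ≠ 0) : ρ.upperSpan 0 = ⊤ :=
  ρ.eq_top_of_forall_mem upperSpan_G (upperSpan_K hm) (upperSpan_S hm) upperSpan_Chi
    (vec_mem_upperSpan (k := 0) false le_rfl)

theorem upperSpan_le (hm : m ≠ 0) {W : Submodule ℂ V} (hW : ρ.Invariant W)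
    (h : ρ.vec (0, N, true) ∈ W) : ρ.upperSpan N ≤ W := by
  have hN : ∀ c, ρ.vec (0, N, c) ∈ W := by
    intro c
    cases c
    · have hChi := W.smul_mem ((-1) ^ N * (m / 2))⁻¹ (hW.Chi_mem _ h)
      rwa [Chi_vec, if_pos rfl, inv_smul_smul₀ (by simp [hm])] at hChi
    · exact h
  rw [upperSpan, Submodule.span_le]
  rintro _ ⟨⟨k, n, c⟩, hn, rfl⟩
  obtain ⟨j, rfl⟩ := Nat.exists_eq_add_of_le (show N ≤ n from hn)
  have hvec : ρ.vec (k, N + j, c) = (ρ.G ^ k) ((ρ.T ^ j) (ρ.vec (0, N, c))) := by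
    simp only [vec, pow_zero, Module.End.one_apply]
    rw [← Module.End.mul_apply (ρ.T ^ j), ← pow_add, add_comm j]
  rw [SetLike.mem_coe, hvec]
  exact Module.End.pow_apply_mem_of_forall_mem k hW.G_mem _
    (Module.End.pow_apply_mem_of_forall_mem j hW.T_mem _ (hN c))

variable (ρ)

theorem gen_invariant (s : Set V) : ρ.Invariant (ρ.gen s) := fun w hw => by
  have h W (hW : W ∈ {W | ρ.Invariant W ∧ s ⊆ W}) := hW.1 w (Submodule.mem_sInf.mp hw W hW)
  refine ⟨?_, ?_, ?_, ?_, ?_, ?_, ?_, ?_, ?_, ?_⟩ <;>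
    exact Submodule.mem_sInf.mpr fun W hW => by have := h W hW; tauto

theorem subset_gen (s : Set V) : s ⊆ ρ.gen s := fun _ hx =>
  Submodule.mem_sInf.mpr fun _ hW => hW.2 hx

theorem gen_le {s : Set V} {W : Submodule ℂ V} (hW : ρ.Invariant W) (hs : s ⊆ W) :
    ρ.gen s ≤ W :=
  sInf_le ⟨hW, hs⟩

theorem singular_eq (hm : m ≠ 0) (p : ℕ) :
    ((ρ.G * ρ.G - (2 * m) • ρ.K) ^ p) (ρ.G ρ.v0 - (2 : ℂ) • ρ.Chi (ρ.S ρ.v0))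
      = (2 * (2 * m) ^ p) • ρ.vec (0, 2 * p + 1, true) := by
  have hSChi := LinearMap.congr_fun ρ.chi_S ρ.v0
  simp only [Module.End.mul_apply, LinearMap.neg_apply] at hSChi
  have hB : ρ.G ρ.v0 - (2 : ℂ) • ρ.Chi (ρ.S ρ.v0) = (2 : ℂ) • ρ.T (ρ.lowest true) := by
    have hX := ρ.X_lowest true
    simp only [lowest, if_true, Bool.not_true, Bool.false_eq_true, if_false] at hX ⊢
    rw [T_apply, hX, hSChi, map_smul]
    match_scalars <;> field_simp
  rw [← ρ.T_mul_T hm, smul_pow, ← pow_two, ← pow_mul, hB, LinearMap.smul_apply, map_smul,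
    smul_smul, ← Module.End.mul_apply, ← pow_succ]
  exact congrArg₂ (· • ·) (by ring) rfl

theorem gen_singular_eq (hm : m ≠ 0) {p : ℕ} (hd : d = p - 1 / 2) :
    ρ.gen {((ρ.G * ρ.G - (2 * m) • ρ.K) ^ p) (ρ.G ρ.v0 - (2 : ℂ) • ρ.Chi (ρ.S ρ.v0))}
      = ρ.upperSpan (2 * p + 1) := by
  have hc : (2 * (2 * m) ^ p : ℂ) ≠ 0 := by simp [hm]
  apply le_antisymm
  · refine ρ.gen_le (upperSpan_invariant hm (qCoeff_two_mul_add_one_eq_zero hd)) ?_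
    rw [Set.singleton_subset_iff, singular_eq ρ hm]
    exact Submodule.smul_mem _ _ (vec_mem_upperSpan true le_rfl)
  · refine upperSpan_le hm (ρ.gen_invariant _) ?_
    convert (ρ.gen _).smul_mem (2 * (2 * m) ^ p)⁻¹ (ρ.subset_gen _ (Set.mem_singleton _))
      using 1
    rw [singular_eq ρ hm, inv_smul_smul₀ hc]

-- For `j > k` both sides vanish (`k.descFactorial j = 0`), so the truncated `k - j` is harmless.
theorem P_pow_vec (hm : m ≠ 0) (j k n : ℕ) (c : Bool) :
    (ρ.P ^ j) (ρ.vec (k, n, c)) =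
      ((k.descFactorial j : ℂ) * m ^ j) • ρ.vec (k - j, n, c) := by
  induction j with
  | zero => simp
  | succ j ih =>
    rw [pow_succ', Module.End.mul_apply, ih, map_smul, P_vec ρ hm, smul_smul,
      Nat.descFactorial_succ, Nat.sub_sub]
    push_cast
    ring_nf

-- For `j > n` the product contains `qCoeff d 0 = 0`, so the truncated `n - j` is harmless.
theorem Q_pow_vec_zero (hm : m ≠ 0) (j n : ℕ) (c : Bool) :
    (ρ.Q ^ j) (ρ.vec (0, n, c)) =
      (∏ i ∈ range j, qCoeff d (n - i)) • ρ.vec (0, n - j, c) := by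
  induction j with
  | zero => simp
  | succ j ih =>
    rw [pow_succ', Module.End.mul_apply, ih, map_smul, Q_vec ρ hm, CharP.cast_eq_zero, zero_smul,
      add_zero, smul_smul, prod_range_succ, Nat.sub_sub, mul_comm]

theorem Q_pow_P_pow_vec (hm : m ≠ 0) {K N k n : ℕ} (c : Bool)
    (hkn : toLex (k, n) ≤ toLex (K, N)) :
    (ρ.Q ^ N) ((ρ.P ^ K) (ρ.vec (k, n, c))) =
      if k = K ∧ n = N then ((K ! * m ^ K) * ∏ i ∈ range N, qCoeff d (N - i)) • ρ.lowest c
      else 0 := by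
  rw [P_pow_vec ρ hm]
  rcases Prod.Lex.toLex_le_toLex.mp hkn with hk | ⟨rfl, hn⟩
  · rw [Nat.descFactorial_eq_zero_iff_lt.mpr hk, if_neg (by omega)]
    simp
  · rw [Nat.descFactorial_self, Nat.sub_self, map_smul, Q_pow_vec_zero ρ hm, smul_smul]
    rcases hn.eq_or_lt with rfl | hlt
    · rw [if_pos ⟨rfl, rfl⟩, Nat.sub_self]
      rfl
    · rw [if_neg (by omega), prod_eq_zero (mem_range.mpr hlt) (by simp [qCoeff]), mul_zero,
        zero_smul]

theorem v0_mem_of_lowest_combination_mem (hm : m ≠ 0) {W : Submodule ℂ V} (hW : ρ.Invariant W)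
    {a b : ℂ} (hab : a ≠ 0 ∨ b ≠ 0) (h : a • ρ.lowest false + b • ρ.lowest true ∈ W) :
    ρ.v0 ∈ W := by
  by_cases hb : b = 0
  · have ha : a ≠ 0 := by tauto
    simpa [hb, lowest, ha] using W.smul_mem a⁻¹ h
  · have hdiff : ρ.Chi (a • ρ.lowest false + b • ρ.lowest true)
        - ρ.X (a • ρ.lowest false + b • ρ.lowest true) = (b * m) • ρ.v0 := by
      simp only [map_add, map_smul, Chi_lowest, X_lowest]
      simp only [Bool.false_eq_true, if_false, if_true, Bool.not_false, Bool.not_true, lowest]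
      module
    have h' := W.smul_mem (b * m)⁻¹ (W.sub_mem (hW.Chi_mem _ h) (hW.X_mem _ h))
    rwa [hdiff, inv_smul_smul₀ (mul_ne_zero hb hm)] at h'

theorem v0_mem_of_linearCombination_mem (hm : m ≠ 0) {p : ℕ} (hd : d = p - 1 / 2)
    {W : Submodule ℂ V} (hW : ρ.Invariant W) {c : ℕ × ℕ × Bool →₀ ℂ}
    (hc : c ∈ Finsupp.supported ℂ ℂ {i | i.2.1 ≤ 2 * p}) (hc0 : c ≠ 0)
    (hcW : Finsupp.linearCombination ℂ ρ.vec c ∈ W) : ρ.v0 ∈ W := by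
  obtain ⟨⟨K, N, c₀⟩, hi₀, hmax⟩ := c.support.exists_max_image (fun i => toLex (i.1, i.2.1))
    (Finsupp.support_nonempty_iff.mpr hc0)
  set γ : ℂ := (K ! * m ^ K) * ∏ i ∈ range N, qCoeff d (N - i)
  have hγ : γ ≠ 0 := by
    have hN : N ≤ 2 * p := (Finsupp.mem_supported _ _).mp hc hi₀
    refine mul_ne_zero (by simp [hm, Nat.factorial_ne_zero]) (prod_ne_zero_iff.mpr fun i hi => ?_)
    exact qCoeff_ne_zero hd (by simp at hi; omega) (by omega)
  have hterm : ∀ i, (ρ.Q ^ N) ((ρ.P ^ K) (c i • ρ.vec i)) =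
      if i.1 = K ∧ i.2.1 = N then (c i * γ) • ρ.lowest i.2.2 else 0 := by
    rintro ⟨k, n, e⟩
    by_cases hi : (k, n, e) ∈ c.support
    · rw [map_smul, map_smul, Q_pow_P_pow_vec ρ hm e (hmax _ hi)]
      split_ifs
      · rw [smul_smul]
      · rw [smul_zero]
    · rw [Finsupp.notMem_support_iff.mp hi]
      simp
  have hsum : (ρ.Q ^ N) ((ρ.P ^ K) (Finsupp.linearCombination ℂ ρ.vec c))
      = γ • (c (K, N, false) • ρ.lowest false + c (K, N, true) • ρ.lowest true) := by
    rw [Finsupp.linearCombination_apply, Finsupp.sum, map_sum, map_sum,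
      sum_congr rfl fun i _ => hterm i, sum_eq_add (K, N, false) (K, N, true) (by simp)]
    · simp only [and_self, if_true]
      module
    · rintro ⟨k, n, e⟩ _ hne
      rw [if_neg]
      rintro ⟨rfl, rfl⟩
      cases e <;> simp at hne
    · intro h
      rw [Finsupp.notMem_support_iff.mp h]
      simp
    · intro h
      rw [Finsupp.notMem_support_iff.mp h]
      simp
  have hmem := Module.End.pow_apply_mem_of_forall_mem N hW.Q_mem _
    (Module.End.pow_apply_mem_of_forall_mem K hW.P_mem _ hcW)
  rw [hsum] at hmem
  refine ρ.v0_mem_of_lowest_combination_mem hm hW ?_ (by simpa [hγ] using W.smul_mem γ⁻¹ hmem)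
  have hc₀ := Finsupp.mem_support_iff.mp hi₀
  cases c₀ <;> tauto

theorem eq_top_of_v0_mem (hm : m ≠ 0) {W : Submodule ℂ V} (hW : ρ.Invariant W)
    (h : ρ.v0 ∈ W) : W = ⊤ :=
  top_le_iff.mp (upperSpan_zero (ρ := ρ) hm ▸ upperSpan_le hm hW (hW.Chi_mem _ h))

theorem v0_mem_of_not_le (hm : m ≠ 0) {p : ℕ} (hd : d = p - 1 / 2) {W : Submodule ℂ V}
    (hW : ρ.Invariant W) (hle : ρ.upperSpan (2 * p + 1) ≤ W)
    (hnot : ¬W ≤ ρ.upperSpan (2 * p + 1)) : ρ.v0 ∈ W := by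
  obtain ⟨w, hwW, hwI⟩ := SetLike.not_le_iff_exists.mp hnot
  have hsplit :
      Submodule.span ℂ (ρ.vec '' {i | i.2.1 ≤ 2 * p}) ⊔ ρ.upperSpan (2 * p + 1) = ⊤ := by
    rw [upperSpan, ← Submodule.span_union, ← Set.image_union, ← upperSpan_zero hm, upperSpan]
    congr
    ext i
    simp only [Set.mem_union, Set.mem_ofPred_eq, zero_le, iff_true]
    omega
  obtain ⟨r, hr, x, hx, rfl⟩ := Submodule.mem_sup.mp (hsplit ▸ Submodule.mem_top : w ∈ _)
  obtain ⟨c, hc, rfl⟩ := (Finsupp.mem_span_image_iff_linearCombination ℂ).mp hr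
  refine ρ.v0_mem_of_linearCombination_mem hm hd hW hc ?_ ?_
  · rintro rfl
    exact hwI (by simpa using hx)
  · simpa using W.sub_mem hwW (hle hx)

end SSch1Verma

/-- For `m ≠ 0` and `d = p - 1/2` (`p ∈ ℤ≥0`), the factor module
`V^d / I^d` by the submodule `I^d` generated by the singular vector
`v_s^p = (G² - 2mK)^p (G - 2χS) v₀` is irreducible; equivalently, the only invariant
subspaces of `V^d` containing `I^d` are `I^d` and `V^d` itself. -/
theorem statement7 {d m : ℂ} {V : Type*} [AddCommGroup V] [Module ℂ V]
    (ρ : SSch1Verma d m V) (hm : m ≠ 0) (p : ℕ) (hd : d = (p : ℂ) - 1/2) :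
    ∀ W : Submodule ℂ V, ρ.Invariant W →
      ρ.gen {(((ρ.G * ρ.G - (2 * m) • ρ.K) ^ p) (ρ.G ρ.v0 - (2 : ℂ) • ρ.Chi (ρ.S ρ.v0)))} ≤ W →
      W = ρ.gen {(((ρ.G * ρ.G - (2 * m) • ρ.K) ^ p) (ρ.G ρ.v0 - (2 : ℂ) • ρ.Chi (ρ.S ρ.v0)))} ∨ W = ⊤ := by
  intro W hW hle
  rw [ρ.gen_singular_eq hm hd] at hle ⊢
  by_cases hWI : W ≤ ρ.upperSpan (2 * p + 1)
  · exact Or.inl (le_antisymm hWI hle)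
  · exact Or.inr (ρ.eq_top_of_v0_mem hm hW (ρ.v0_mem_of_not_le hm hd hW hle hWI))
end
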